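/- arXiv:2410.06909 — 5 statements merged into one kernel-verified Lean document; each statement's English description precedes it below -/
import Mathlib

section
/- Let E and F be pseudo-normed real vector spaces, let s_0 < s < s_1 be real numbers, q ∈ [1,∞], r > 0, and let Φ : B_{s,q}(0,r) → Σ^{s_0}_∞(F) satisfy the weak Lipschitz and tame estimates. Then for every v ∈ B_{s,q}(0,r), the sequence Φ(v) belongs to Σ^s_q(F), i.e. ‖Φ(v)‖_{Σ^s_q(F)} < ∞ (and, when q = ∞, 2^{ks}‖(Φ(v))_k‖_F → 0 as k → ∞). -/
open Filter
open scoped ENNReal NNReal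

/-- A pseudo-norm on a real vector space: nonnegative, symmetric, subadditive,
and vanishing exactly at `0`. -/
structure IsPseudoNorm {E : Type*} [AddCommGroup E] [Module ℝ E] (N : E → ℝ) : Prop where
  nonneg : ∀ x, 0 ≤ N x
  neg : ∀ x, N (-x) = N x
  add_le : ∀ x y, N (x + y) ≤ N x + N y
  eq_zero_iff : ∀ x, N x = 0 ↔ x = 0

/-- The `Σ^s_q(E)` pseudo-norm of a sequence `f : ℕ → E`:
`(∑_k 2^{qks} ‖f_k‖_E^q)^{1/q}` for `q < ∞` and `sup_k 2^{ks} ‖f_k‖_E` for `q = ∞`. -/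
noncomputable def sigmaNorm {E : Type*} (N : E → ℝ) (s : ℝ) (q : ℝ≥0∞) (f : ℕ → E) : ℝ≥0∞ :=
  if q = ⊤ then ⨆ k : ℕ, ENNReal.ofReal ((2 : ℝ) ^ ((k : ℝ) * s) * N (f k))
  else (∑' k : ℕ, ENNReal.ofReal ((2 : ℝ) ^ ((k : ℝ) * s) * N (f k)) ^ q.toReal) ^ (1 / q.toReal)

/-- Membership in `Σ^s_q(E)`: finiteness of the norm when `q < ∞`, and
`2^{ks}‖f_k‖_E → 0` when `q = ∞`. -/
def memSigma {E : Type*} (N : E → ℝ) (s : ℝ) (q : ℝ≥0∞) (f : ℕ → E) : Prop :=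
  if q = ⊤ then Tendsto (fun k : ℕ => (2 : ℝ) ^ ((k : ℝ) * s) * N (f k)) atTop (nhds 0)
  else sigmaNorm N s q f < ⊤

/-- Friedrichs smoothing operator `S_n`: truncation of a sequence after index `n`. -/
def smoothS {E : Type*} [Zero E] (n : ℕ) (f : ℕ → E) : ℕ → E :=
  fun k => if k ≤ n then f k else 0

/-!
At every frequency `n` split `Φ v = (Φ v - Φ (S_n v)) + Φ (S_n v)`. The weak Lipschitz estimate
bounds the first term by the high modes `k > n` of `v`, with the gain `2^{(k-n)(s₀-s)}`; the tame
estimate bounds the second by the low modes `k ≤ n`, with the gain `2^{(n-k)(s-s₁)}`. Hence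
`2^{ns} ‖Φ(v)_n‖ ≤ ∑_k K(n,k) 2^{ks} ‖v_k‖` for a kernel `K` decaying geometrically away from the
diagonal. Its row and column sums are bounded, so by Schur's test it acts boundedly on `ℓ^q` for
`q < ∞`, and it maps null sequences to null sequences, which is the case `q = ∞`.
-/

open Topology

theorem ENNReal.tsum_ite_pow_le_inv_one_sub (t : ℝ≥0∞) (P : ℕ → Prop) [DecidablePred P]
    {e : ℕ → ℕ} (he : Set.InjOn e {k | P k}) :
    ∑' k, (if P k then t ^ e k else 0) ≤ (1 - t)⁻¹ := by
  rw [← ENNReal.tsum_geometric, ENNReal.tsum_eq_iSup_sum]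
  refine iSup_le fun S => ?_
  rw [← Finset.sum_filter, ← Finset.sum_image (f := (t ^ ·)) (s := S.filter P) fun a ha b hb =>
    he (Finset.mem_filter.1 ha).2 (Finset.mem_filter.1 hb).2]
  exact ENNReal.sum_le_tsum _

theorem ENNReal.tsum_mul_le_tsum_rpow_mul_tsum_rpow {ι : Type*} {p p' : ℝ}
    (hpq : p.HolderConjugate p') (f g : ι → ℝ≥0∞) :
    ∑' i, f i * g i ≤ (∑' i, f i ^ p) ^ (1 / p) * (∑' i, g i ^ p') ^ (1 / p') := by
  let _ : MeasurableSpace ι := ⊤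
  simpa [MeasureTheory.lintegral_count] using
    ENNReal.lintegral_mul_le_Lp_mul_Lq MeasureTheory.Measure.count hpq
      (measurable_from_top (f := f)).aemeasurable (measurable_from_top (f := g)).aemeasurable

theorem ENNReal.rpow_tsum_mul_le {ι : Type*} (K A : ι → ℝ≥0∞) {p : ℝ} (hp : 1 ≤ p) :
    (∑' i, K i * A i) ^ p ≤ (∑' i, K i) ^ (p - 1) * ∑' i, K i * A i ^ p := by
  rcases hp.eq_or_lt with rfl | hp
  · simp
  have hpq : p.HolderConjugate (p / (p - 1)) := .conjExponent hp
  set p' := p / (p - 1)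
  -- Hölder for the factorisation `K A = (K ^ (1/p) A) (K ^ (1/p'))`.
  have hHolder : ∑' i, K i * A i ≤ (∑' i, K i * A i ^ p) ^ (1 / p) * (∑' i, K i) ^ (1 / p') := by
    calc ∑' i, K i * A i = ∑' i, (K i ^ (1 / p) * A i) * K i ^ (1 / p') := by
          refine tsum_congr fun i => ?_
          rw [mul_right_comm, ← ENNReal.rpow_add_of_nonneg _ _ hpq.one_div_nonneg
            hpq.symm.one_div_nonneg, one_div, one_div, hpq.inv_add_inv_eq_inv, inv_one,
            ENNReal.rpow_one]
      _ ≤ _ := ENNReal.tsum_mul_le_tsum_rpow_mul_tsum_rpow hpq _ _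
      _ = _ := by
          congr 2 <;> refine tsum_congr fun i => ?_
          · rw [ENNReal.mul_rpow_of_nonneg _ _ hpq.nonneg, ← ENNReal.rpow_mul,
              one_div_mul_cancel hpq.ne_zero, ENNReal.rpow_one]
          · rw [← ENNReal.rpow_mul, one_div_mul_cancel hpq.symm.ne_zero, ENNReal.rpow_one]
  calc (∑' i, K i * A i) ^ p
      ≤ ((∑' i, K i * A i ^ p) ^ (1 / p) * (∑' i, K i) ^ (1 / p')) ^ p :=
        ENNReal.rpow_le_rpow hHolder hpq.nonneg
    _ = (∑' i, K i) ^ (p - 1) * ∑' i, K i * A i ^ p := by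
        rw [ENNReal.mul_rpow_of_nonneg _ _ hpq.nonneg, ← ENNReal.rpow_mul, ← ENNReal.rpow_mul,
          one_div_mul_cancel hpq.ne_zero, ENNReal.rpow_one, mul_comm, one_div, inv_mul_eq_div,
          hpq.div_conj_eq_sub_one]

theorem ENNReal.tsum_rpow_tsum_mul_le {ι κ : Type*} (K : ι → κ → ℝ≥0∞) (A : κ → ℝ≥0∞)
    {M : ℝ≥0∞} {p : ℝ} (hp : 1 ≤ p)
    (hrow : ∀ n, ∑' k, K n k ≤ M) (hcol : ∀ k, ∑' n, K n k ≤ M) :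
    ∑' n, (∑' k, K n k * A k) ^ p ≤ M ^ p * ∑' k, A k ^ p := by
  have hp1 : 0 ≤ p - 1 := sub_nonneg.2 hp
  calc ∑' n, (∑' k, K n k * A k) ^ p
      ≤ ∑' n, M ^ (p - 1) * ∑' k, K n k * A k ^ p := ENNReal.tsum_le_tsum fun n =>
        (ENNReal.rpow_tsum_mul_le _ _ hp).trans
          (mul_le_mul_left (ENNReal.rpow_le_rpow (hrow n) hp1) _)
    _ = M ^ (p - 1) * ∑' k, (∑' n, K n k) * A k ^ p := by
        rw [ENNReal.tsum_mul_left, ENNReal.tsum_comm]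
        simp only [ENNReal.tsum_mul_right]
    _ ≤ M ^ (p - 1) * ∑' k, M * A k ^ p :=
        mul_le_mul_right (ENNReal.tsum_le_tsum fun k => mul_le_mul_left (hcol k) _) _
    _ = M ^ p * ∑' k, A k ^ p := by
        rw [ENNReal.tsum_mul_left, ← mul_assoc]
        congr 1
        conv_rhs => rw [← sub_add_cancel p 1]
        rw [ENNReal.rpow_add_of_nonneg _ _ hp1 zero_le_one, ENNReal.rpow_one]

theorem ENNReal.tendsto_tsum_mul_nhds_zero {K : ℕ → ℕ → ℝ≥0∞} {A : ℕ → ℝ≥0∞} {M : ℝ≥0∞}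
    (hM : M ≠ ⊤) (hrow : ∀ n, ∑' k, K n k ≤ M)
    (hcol : ∀ k, Tendsto (fun n => K n k) atTop (𝓝 0))
    (hA_ne_top : ∀ k, A k ≠ ⊤) (hA : Tendsto A atTop (𝓝 0)) :
    Tendsto (fun n => ∑' k, K n k * A k) atTop (𝓝 0) := by
  rw [ENNReal.tendsto_nhds_zero]
  intro ε hε
  obtain ⟨δ, hδ, hδM⟩ := ENNReal.exists_nnreal_pos_mul_lt hM (ENNReal.half_pos hε.ne').ne'
  -- Beyond `N` the tail of `A` is below `δ`; the finitely many columns before `N` tend to zero.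
  obtain ⟨N, hN⟩ := eventually_atTop.1 (ENNReal.tendsto_nhds_zero.1 hA δ (by simpa using hδ))
  have hhead : Tendsto (fun n => ∑ k ∈ Finset.range N, K n k * A k) atTop (𝓝 0) := by
    simpa using tendsto_finsetSum (Finset.range N)
      fun k _ => ENNReal.Tendsto.mul_const (hcol k) (Or.inr (hA_ne_top k))
  filter_upwards [ENNReal.tendsto_nhds_zero.1 hhead (ε / 2) (ENNReal.half_pos hε.ne')] with n hn
  have hsplit : ∀ k, K n k * A k ≤ (if k < N then K n k * A k else 0) + K n k * δ := by
    intro k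
    split_ifs with hk
    · exact le_self_add
    · simpa using mul_le_mul_right (hN k (not_lt.1 hk)) (K n k)
  calc ∑' k, K n k * A k
      ≤ ∑' k, ((if k < N then K n k * A k else 0) + K n k * δ) := ENNReal.tsum_le_tsum hsplit
    _ = ∑ k ∈ Finset.range N, K n k * A k + (∑' k, K n k) * δ := by
        rw [ENNReal.tsum_add, ENNReal.tsum_mul_right, tsum_eq_sum (s := Finset.range N)
          fun k hk => if_neg (by simpa using hk), Finset.sum_congr rfl
          fun k hk => if_pos (Finset.mem_range.1 hk)]
    _ ≤ ε / 2 + ε / 2 := by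
        gcongr
        exact (mul_le_mul_left (hrow n) _).trans (mul_comm M δ ▸ hδM.le)
    _ = ε := ENNReal.add_halves ε

noncomputable def geomKernel (c₀ t c₁ u : ℝ≥0∞) (n k : ℕ) : ℝ≥0∞ :=
  if n < k then c₀ * t ^ (k - n) else c₁ * u ^ (n - k)

section geomKernel

variable {c₀ t c₁ u : ℝ≥0∞}

theorem geomKernel_eq (n k : ℕ) :
    geomKernel c₀ t c₁ u n k =
      c₀ * (if n < k then t ^ (k - n) else 0) + c₁ * (if k ≤ n then u ^ (n - k) else 0) := by
  unfold geomKernel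
  split_ifs <;> first | omega | simp

theorem tsum_geomKernel_right_le (n : ℕ) :
    ∑' k, geomKernel c₀ t c₁ u n k ≤ c₀ * (1 - t)⁻¹ + c₁ * (1 - u)⁻¹ := by
  simp only [geomKernel_eq, ENNReal.tsum_add, ENNReal.tsum_mul_left]
  gcongr
  · exact ENNReal.tsum_ite_pow_le_inv_one_sub t _ fun a ha b hb hab => by simp at ha hb; omega
  · exact ENNReal.tsum_ite_pow_le_inv_one_sub u _ fun a ha b hb hab => by simp at ha hb; omega

theorem tsum_geomKernel_left_le (k : ℕ) :
    ∑' n, geomKernel c₀ t c₁ u n k ≤ c₀ * (1 - t)⁻¹ + c₁ * (1 - u)⁻¹ := by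
  simp only [geomKernel_eq, ENNReal.tsum_add, ENNReal.tsum_mul_left]
  gcongr
  · exact ENNReal.tsum_ite_pow_le_inv_one_sub t _ fun a ha b hb hab => by simp at ha hb; omega
  · exact ENNReal.tsum_ite_pow_le_inv_one_sub u _ fun a ha b hb hab => by simp at ha hb; omega

theorem tendsto_geomKernel_atTop (hc₁ : c₁ ≠ ⊤) (hu : u < 1) (k : ℕ) :
    Tendsto (geomKernel c₀ t c₁ u · k) atTop (𝓝 0) := by
  have hpow : Tendsto (fun n => c₁ * u ^ (n - k)) atTop (𝓝 0) := by
    simpa using ENNReal.Tendsto.const_mul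
      ((ENNReal.tendsto_pow_atTop_nhds_zero_of_lt_one hu).comp (tendsto_sub_atTop_nat k))
      (Or.inr hc₁)
  refine hpow.congr' ?_
  filter_upwards [eventually_ge_atTop k] with n hn
  simp [geomKernel, not_lt.2 hn]

end geomKernel

theorem two_rpow_mul_two_rpow_shift (n k : ℕ) (s σ : ℝ) :
    (2 : ℝ) ^ ((n : ℝ) * (s - σ)) * 2 ^ ((k : ℝ) * σ) =
      2 ^ (((k : ℝ) - n) * (σ - s)) * 2 ^ ((k : ℝ) * s) := by
  rw [← Real.rpow_add two_pos, ← Real.rpow_add two_pos]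
  ring_nf

theorem ofReal_two_rpow_natCast_mul (m : ℕ) (c : ℝ) :
    ENNReal.ofReal ((2 : ℝ) ^ ((m : ℝ) * c)) = ENNReal.ofReal (2 ^ c) ^ m := by
  rw [mul_comm, Real.rpow_mul_natCast zero_le_two, ENNReal.ofReal_pow (by positivity)]

theorem ofReal_two_rpow_le_tsum_shift {s σ x : ℝ} {a : ℕ → ℝ} {c : ℝ≥0∞} (n : ℕ)
    (P : ℕ → Prop) [DecidablePred P]
    (h : ENNReal.ofReal ((2 : ℝ) ^ ((n : ℝ) * σ) * x) ≤
      c * ∑' k, if P k then ENNReal.ofReal ((2 : ℝ) ^ ((k : ℝ) * σ) * a k) else 0) :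
    ENNReal.ofReal ((2 : ℝ) ^ ((n : ℝ) * s) * x) ≤
      ∑' k, if P k then c * ENNReal.ofReal ((2 : ℝ) ^ (((k : ℝ) - n) * (σ - s))) *
        ENNReal.ofReal ((2 : ℝ) ^ ((k : ℝ) * s) * a k) else 0 := by
  have hsplit (k : ℕ) (b : ℝ) : (2 : ℝ) ^ ((k : ℝ) * s) * b =
      2 ^ ((k : ℝ) * (s - σ)) * (2 ^ ((k : ℝ) * σ) * b) := by
    rw [← mul_assoc, ← Real.rpow_add two_pos]
    ring_nf
  calc ENNReal.ofReal ((2 : ℝ) ^ ((n : ℝ) * s) * x)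
      = ENNReal.ofReal (2 ^ ((n : ℝ) * (s - σ))) * ENNReal.ofReal (2 ^ ((n : ℝ) * σ) * x) := by
        rw [hsplit, ENNReal.ofReal_mul (by positivity)]
    _ ≤ ENNReal.ofReal (2 ^ ((n : ℝ) * (s - σ))) *
          (c * ∑' k, if P k then ENNReal.ofReal ((2 : ℝ) ^ ((k : ℝ) * σ) * a k) else 0) := by
        gcongr
    _ = _ := by
        rw [← ENNReal.tsum_mul_left, ← ENNReal.tsum_mul_left]
        refine tsum_congr fun k => ?_
        split_ifs
        · rw [mul_left_comm, mul_assoc, ← ENNReal.ofReal_mul (by positivity), ← mul_assoc,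
            two_rpow_mul_two_rpow_shift, mul_assoc,
            ENNReal.ofReal_mul (by positivity)]
        · simp

theorem ofReal_two_rpow_le_tsum_geomKernel {s₀ s s₁ x y z : ℝ} {a : ℕ → ℝ} {c₀ c₁ : ℝ≥0∞}
    (n : ℕ) (hx : x ≤ y + z) (hy : 0 ≤ y) (hz : 0 ≤ z)
    (hy_le : ENNReal.ofReal ((2 : ℝ) ^ ((n : ℝ) * s₀) * y) ≤
      c₀ * ∑' k, if n < k then ENNReal.ofReal ((2 : ℝ) ^ ((k : ℝ) * s₀) * a k) else 0)
    (hz_le : ENNReal.ofReal ((2 : ℝ) ^ ((n : ℝ) * s₁) * z) ≤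
      c₁ * ∑' k, if k ≤ n then ENNReal.ofReal ((2 : ℝ) ^ ((k : ℝ) * s₁) * a k) else 0) :
    ENNReal.ofReal ((2 : ℝ) ^ ((n : ℝ) * s) * x) ≤
      ∑' k, geomKernel c₀ (ENNReal.ofReal (2 ^ (s₀ - s))) c₁ (ENNReal.ofReal (2 ^ (s - s₁))) n k *
        ENNReal.ofReal ((2 : ℝ) ^ ((k : ℝ) * s) * a k) := by
  calc ENNReal.ofReal ((2 : ℝ) ^ ((n : ℝ) * s) * x)
      ≤ ENNReal.ofReal ((2 : ℝ) ^ ((n : ℝ) * s) * y) +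
          ENNReal.ofReal ((2 : ℝ) ^ ((n : ℝ) * s) * z) := by
        rw [← ENNReal.ofReal_add (by positivity) (by positivity), ← mul_add]
        gcongr
    _ ≤ _ := add_le_add (ofReal_two_rpow_le_tsum_shift n _ hy_le)
        (ofReal_two_rpow_le_tsum_shift n _ hz_le)
    _ = _ := by
        rw [← ENNReal.tsum_add]
        refine tsum_congr fun k => ?_
        by_cases hnk : n < k
        · rw [if_pos hnk, if_neg (not_le.2 hnk), add_zero, geomKernel, if_pos hnk,
            ← ofReal_two_rpow_natCast_mul, Nat.cast_sub hnk.le]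
        · rw [if_neg hnk, if_pos (not_lt.1 hnk), zero_add, geomKernel, if_neg hnk,
            ← ofReal_two_rpow_natCast_mul, Nat.cast_sub (not_lt.1 hnk)]
          ring_nf

section sigmaNorm

variable {E F : Type*}

theorem sigmaNorm_one (N : E → ℝ) (σ : ℝ) (f : ℕ → E) :
    sigmaNorm N σ 1 f = ∑' k : ℕ, ENNReal.ofReal ((2 : ℝ) ^ ((k : ℝ) * σ) * N (f k)) := by
  simp [sigmaNorm]

theorem ofReal_le_sigmaNorm_top (N : E → ℝ) (σ : ℝ) (f : ℕ → E) (n : ℕ) :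
    ENNReal.ofReal ((2 : ℝ) ^ ((n : ℝ) * σ) * N (f n)) ≤ sigmaNorm N σ ⊤ f := by
  simpa [sigmaNorm] using
    le_iSup (fun k : ℕ => ENNReal.ofReal ((2 : ℝ) ^ ((k : ℝ) * σ) * N (f k))) n

theorem sigmaNorm_mono {N : E → ℝ} {N' : F → ℝ} {f : ℕ → E} {g : ℕ → F} (σ : ℝ) (q : ℝ≥0∞)
    (h : ∀ k, N (f k) ≤ N' (g k)) : sigmaNorm N σ q f ≤ sigmaNorm N' σ q g := by
  unfold sigmaNorm
  split_ifs <;> gcongr with k <;> exact h k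

section smoothS

variable {N : E → ℝ}

theorem apply_smoothS [Zero E] (hN : N 0 = 0) (n : ℕ) (f : ℕ → E) (k : ℕ) :
    N (smoothS n f k) = if k ≤ n then N (f k) else 0 := by
  unfold smoothS
  split_ifs <;> simp [hN]

theorem apply_sub_smoothS [AddGroup E] (hN : N 0 = 0) (n : ℕ) (f : ℕ → E) (k : ℕ) :
    N ((f - smoothS n f) k) = if n < k then N (f k) else 0 := by
  simp only [Pi.sub_apply, smoothS]
  split_ifs <;> first | omega | simp [hN]

theorem memSigma_smoothS [Zero E] (hN : N 0 = 0) (σ : ℝ) {q : ℝ≥0∞} (hq : q ≠ 0) (n : ℕ)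
    (f : ℕ → E) : memSigma N σ q (smoothS n f) := by
  unfold memSigma
  split_ifs with hq_top
  · refine tendsto_const_nhds.congr' ?_
    filter_upwards [eventually_gt_atTop n] with k hk
    simp [apply_smoothS hN, not_le.2 hk]
  · have hq_pos : 0 < q.toReal := ENNReal.toReal_pos hq hq_top
    rw [sigmaNorm, if_neg hq_top]
    refine ENNReal.rpow_lt_top_of_nonneg (by positivity) ?_
    rw [tsum_eq_sum (s := Finset.range (n + 1)) fun k hk => by
      simp [apply_smoothS hN, show ¬k ≤ n by simpa [Nat.lt_succ_iff] using hk, hq_pos]]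
    exact ENNReal.sum_ne_top.2 fun k _ =>
      ENNReal.rpow_ne_top_of_nonneg hq_pos.le ENNReal.ofReal_ne_top

theorem sigmaNorm_smoothS_le [Zero E] (hN : N 0 = 0) (hN_nonneg : ∀ x, 0 ≤ N x) (σ : ℝ)
    (q : ℝ≥0∞) (n : ℕ) (f : ℕ → E) : sigmaNorm N σ q (smoothS n f) ≤ sigmaNorm N σ q f :=
  sigmaNorm_mono σ q fun k => by
    rw [apply_smoothS hN]
    split_ifs
    exacts [le_rfl, hN_nonneg _]

theorem sigmaNorm_one_smoothS [Zero E] (hN : N 0 = 0) (σ : ℝ) (n : ℕ) (f : ℕ → E) :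
    sigmaNorm N σ 1 (smoothS n f) =
      ∑' k : ℕ, if k ≤ n then ENNReal.ofReal ((2 : ℝ) ^ ((k : ℝ) * σ) * N (f k)) else 0 := by
  rw [sigmaNorm_one]
  refine tsum_congr fun k => ?_
  rw [apply_smoothS hN]
  split_ifs <;> simp

theorem sigmaNorm_one_sub_smoothS [AddGroup E] (hN : N 0 = 0) (σ : ℝ) (n : ℕ) (f : ℕ → E) :
    sigmaNorm N σ 1 (f - smoothS n f) =
      ∑' k : ℕ, if n < k then ENNReal.ofReal ((2 : ℝ) ^ ((k : ℝ) * σ) * N (f k)) else 0 := by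
  rw [sigmaNorm_one]
  refine tsum_congr fun k => ?_
  rw [apply_sub_smoothS hN]
  split_ifs <;> simp

end smoothS

end sigmaNorm

section kernelBound

variable {E F : Type*} {N : E → ℝ} {N' : F → ℝ} {s : ℝ} {v : ℕ → E} {g : ℕ → F}
  {K : ℕ → ℕ → ℝ≥0∞} {M : ℝ≥0∞}

theorem memSigma_top_of_le_tsum_mul (hM : M ≠ ⊤) (hrow : ∀ n, ∑' k, K n k ≤ M)
    (hcol : ∀ k, Tendsto (K · k) atTop (𝓝 0)) (hN' : ∀ x, 0 ≤ N' x)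
    (hg : ∀ n : ℕ, ENNReal.ofReal ((2 : ℝ) ^ ((n : ℝ) * s) * N' (g n)) ≤
      ∑' k, K n k * ENNReal.ofReal ((2 : ℝ) ^ ((k : ℝ) * s) * N (v k)))
    (hv : memSigma N s ⊤ v) : memSigma N' s ⊤ g := by
  rw [memSigma, if_pos rfl] at hv ⊢
  have hsum := ENNReal.tendsto_tsum_mul_nhds_zero hM hrow hcol (fun _ => ENNReal.ofReal_ne_top)
    (by simpa using ENNReal.tendsto_ofReal hv)
  have hg_lim := tendsto_of_tendsto_of_tendsto_of_le_of_le tendsto_const_nhds hsum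
    (fun _ => bot_le) hg
  refine ((ENNReal.tendsto_toReal ENNReal.zero_ne_top).comp hg_lim).congr fun n => ?_
  exact ENNReal.toReal_ofReal (mul_nonneg (by positivity) (hN' _))

theorem memSigma_of_le_tsum_mul {q : ℝ≥0∞} (hq : 1 ≤ q) (hq_top : q ≠ ⊤) (hM : M ≠ ⊤)
    (hrow : ∀ n, ∑' k, K n k ≤ M) (hcol : ∀ k, ∑' n, K n k ≤ M)
    (hg : ∀ n : ℕ, ENNReal.ofReal ((2 : ℝ) ^ ((n : ℝ) * s) * N' (g n)) ≤
      ∑' k, K n k * ENNReal.ofReal ((2 : ℝ) ^ ((k : ℝ) * s) * N (v k)))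
    (hv : memSigma N s q v) : memSigma N' s q g := by
  have hp : 1 ≤ q.toReal := by simpa using ENNReal.toReal_mono hq_top hq
  have hp_pos : 0 < q.toReal := zero_lt_one.trans_le hp
  rw [memSigma, if_neg hq_top, sigmaNorm, if_neg hq_top] at hv ⊢
  have hv_fin := (ENNReal.rpow_lt_top_iff_of_pos (by positivity)).1 hv
  refine ENNReal.rpow_lt_top_of_nonneg (by positivity) (ne_top_of_le_ne_top ?_
    ((ENNReal.tsum_le_tsum fun n => ENNReal.rpow_le_rpow (hg n) hp_pos.le).trans
      (ENNReal.tsum_rpow_tsum_mul_le K _ hp hrow hcol)))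
  exact ENNReal.mul_ne_top (ENNReal.rpow_ne_top_of_nonneg hp_pos.le hM) hv_fin.ne

theorem memSigma_of_le_tsum_geomKernel {q : ℝ≥0∞} (hq : 1 ≤ q) {c₀ t c₁ u : ℝ≥0∞}
    (hc₀ : c₀ ≠ ⊤) (hc₁ : c₁ ≠ ⊤) (ht : t < 1) (hu : u < 1) (hN' : ∀ x, 0 ≤ N' x)
    (hg : ∀ n : ℕ, ENNReal.ofReal ((2 : ℝ) ^ ((n : ℝ) * s) * N' (g n)) ≤
      ∑' k, geomKernel c₀ t c₁ u n k * ENNReal.ofReal ((2 : ℝ) ^ ((k : ℝ) * s) * N (v k)))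
    (hv : memSigma N s q v) : memSigma N' s q g := by
  have hM : c₀ * (1 - t)⁻¹ + c₁ * (1 - u)⁻¹ ≠ ⊤ := by
    simp [ENNReal.mul_eq_top, hc₀, hc₁, (tsub_pos_of_lt ht).ne', (tsub_pos_of_lt hu).ne']
  rcases eq_or_ne q ⊤ with rfl | hq_top
  · exact memSigma_top_of_le_tsum_mul hM tsum_geomKernel_right_le
      (tendsto_geomKernel_atTop hc₁ hu) hN' hg hv
  · exact memSigma_of_le_tsum_mul hq hq_top hM tsum_geomKernel_right_le
      tsum_geomKernel_left_le hg hv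

end kernelBound

theorem IsPseudoNorm.le_sub_add {E : Type*} [AddCommGroup E] [Module ℝ E] {N : E → ℝ}
    (hN : IsPseudoNorm N) (x y : E) : N x ≤ N (x - y) + N y := by
  simpa using hN.add_le (x - y) y

theorem interpolation_of_weakLipschitz_tame_general
    {E F : Type*} [AddCommGroup E] [Module ℝ E] [AddCommGroup F] [Module ℝ F]
    (NE : E → ℝ) (NF : F → ℝ) (hNE : IsPseudoNorm NE) (hNF : IsPseudoNorm NF)
    (s₀ s s₁ : ℝ) (hs₀ : s₀ < s) (hs₁ : s < s₁)
    (q : ℝ≥0∞) (hq : 1 ≤ q) (r : ℝ)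
    (Φ : (ℕ → E) → (ℕ → F))
    -- weak Lipschitz estimate
    (C₀ : ℝ)
    (hlip : ∀ v w, memSigma NE s q v → sigmaNorm NE s q v < ENNReal.ofReal r →
      memSigma NE s q w → sigmaNorm NE s q w < ENNReal.ofReal r →
      sigmaNorm NF s₀ ⊤ (Φ v - Φ w) ≤ ENNReal.ofReal C₀ * sigmaNorm NE s₀ 1 (v - w))
    -- tame estimate, for v ∈ Σ^∞_1(E) ∩ B_{s,q}(0,r)
    (C₁ : ℝ)
    (htame : ∀ v, (∀ σ : ℝ, memSigma NE σ 1 v) →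
      memSigma NE s q v → sigmaNorm NE s q v < ENNReal.ofReal r →
      sigmaNorm NF s₁ ⊤ (Φ v) ≤ ENNReal.ofReal C₁ * sigmaNorm NE s₁ 1 v) :
    ∀ v, memSigma NE s q v → sigmaNorm NE s q v < ENNReal.ofReal r →
      memSigma NF s q (Φ v) := by
  intro v hv hvr
  have hNE0 : NE 0 = 0 := (hNE.eq_zero_iff 0).2 rfl
  have hq0 : q ≠ 0 := (zero_lt_one.trans_le hq).ne'
  have hmem (n : ℕ) := memSigma_smoothS hNE0 s hq0 n v
  have hball (n : ℕ) := (sigmaNorm_smoothS_le hNE0 hNE.nonneg s q n v).trans_lt hvr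
  have two_rpow_lt_one {c : ℝ} (hc : c < 0) : ENNReal.ofReal (2 ^ c) < 1 :=
    ENNReal.ofReal_lt_one.2 (Real.rpow_lt_one_of_one_lt_of_neg one_lt_two hc)
  refine memSigma_of_le_tsum_geomKernel (c₀ := ENNReal.ofReal C₀) (c₁ := ENNReal.ofReal C₁) hq
    ENNReal.ofReal_ne_top ENNReal.ofReal_ne_top
    (two_rpow_lt_one (sub_neg.2 hs₀)) (two_rpow_lt_one (sub_neg.2 hs₁)) hNF.nonneg
    (fun n => ?_) hv
  refine ofReal_two_rpow_le_tsum_geomKernel n (hNF.le_sub_add _ (Φ (smoothS n v) n))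
    (hNF.nonneg _) (hNF.nonneg _) ?_ ?_
  · rw [← sigmaNorm_one_sub_smoothS hNE0]
    exact (ofReal_le_sigmaNorm_top _ _ _ n).trans (hlip v _ hv hvr (hmem n) (hball n))
  · rw [← sigmaNorm_one_smoothS hNE0]
    exact (ofReal_le_sigmaNorm_top _ _ _ n).trans
      (htame _ (fun σ => memSigma_smoothS hNE0 σ one_ne_zero n v) (hmem n) (hball n))

/-- Theorem 3.1 (interpolation part): if `Φ : B_{s,q}(0,r) ⊆ Σ^s_q(E) → Σ^{s₀}_∞(F)`
satisfies the weak Lipschitz estimate and the tame estimate, then `Φ(v) ∈ Σ^s_q(F)`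
for every `v ∈ B_{s,q}(0,r)` (finiteness of `‖Φ(v)‖_{Σ^s_q(F)}` for `q < ∞`, and
`2^{ks}‖(Φ(v))_k‖_F → 0` for `q = ∞`). -/
theorem interpolation_of_weakLipschitz_tame
    {E F : Type*} [AddCommGroup E] [Module ℝ E] [AddCommGroup F] [Module ℝ F]
    (NE : E → ℝ) (NF : F → ℝ) (hNE : IsPseudoNorm NE) (hNF : IsPseudoNorm NF)
    (s₀ s s₁ : ℝ) (hs₀ : s₀ < s) (hs₁ : s < s₁)
    (q : ℝ≥0∞) (hq : 1 ≤ q) (r : ℝ) (hr : 0 < r)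
    (Φ : (ℕ → E) → (ℕ → F))
    -- Φ maps the ball B_{s,q}(0,r) into Σ^{s₀}_∞(F)
    (hΦmem : ∀ v, memSigma NE s q v → sigmaNorm NE s q v < ENNReal.ofReal r →
      memSigma NF s₀ ⊤ (Φ v))
    -- weak Lipschitz estimate
    (C₀ : ℝ) (hC₀ : 0 < C₀)
    (hlip : ∀ v w, memSigma NE s q v → sigmaNorm NE s q v < ENNReal.ofReal r →
      memSigma NE s q w → sigmaNorm NE s q w < ENNReal.ofReal r →
      sigmaNorm NF s₀ ⊤ (Φ v - Φ w) ≤ ENNReal.ofReal C₀ * sigmaNorm NE s₀ 1 (v - w))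
    -- tame estimate, for v ∈ Σ^∞_1(E) ∩ B_{s,q}(0,r)
    (C₁ : ℝ) (hC₁ : 0 < C₁)
    (htame : ∀ v, (∀ σ : ℝ, memSigma NE σ 1 v) →
      memSigma NE s q v → sigmaNorm NE s q v < ENNReal.ofReal r →
      sigmaNorm NF s₁ ⊤ (Φ v) ≤ ENNReal.ofReal C₁ * sigmaNorm NE s₁ 1 v) :
    ∀ v, memSigma NE s q v → sigmaNorm NE s q v < ENNReal.ofReal r →
      memSigma NF s q (Φ v) :=
  interpolation_of_weakLipschitz_tame_general NE NF hNE hNF s₀ s s₁ hs₀ hs₁ q hq r Φ C₀ hlip C₁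
    htame
end

section
/- Let (E,‖·‖_E) be a pseudo-normed real vector space, q ∈ [1,∞) and r < r' real numbers. Then there exists a constant K > 0 (one may take K = 1/(1 − 2^{−q(r'−r)})) such that for all f ∈ Σ^r_q(E): ∑_{n∈ℕ} 2^{−qn(r'−r)} ‖S_n f‖_{Σ^{r'}_q}^q ≤ K ‖f‖_{Σ^r_q}^q. -/
open Filter
open scoped ENNReal NNReal

/-!
Expand `‖S_n f‖^q_{Σ^{r'}_q}` as the sum of `2^{qkr'}‖f_k‖^q` over `k ≤ n` and exchange the
sums over `n` and `k`: the term of index `k` collects the weights `2^{-qn(r'-r)}`, `n ≥ k`, whose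
geometric tail is `K 2^{-qk(r'-r)}`, and this turns it into `K 2^{qkr}‖f_k‖^q`. So the estimate is
in fact an equality.
-/

namespace ENNReal

theorem tsum_ite_le_pow (ρ : ℝ≥0∞) (k : ℕ) :
    ∑' n : ℕ, (if k ≤ n then ρ ^ n else 0) = ρ ^ k * (1 - ρ)⁻¹ := by
  rw [← ENNReal.summable.sum_add_tsum_nat_add' (k := k),
    Finset.sum_eq_zero fun i hi => if_neg (Nat.not_le.mpr (Finset.mem_range.mp hi)), zero_add]
  simp_rw [if_pos (Nat.le_add_left k _), pow_add, ENNReal.tsum_mul_right, tsum_geometric,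
    mul_comm]

theorem tsum_pow_mul_tsum_ite_le (ρ : ℝ≥0∞) (a : ℕ → ℝ≥0∞) :
    ∑' n : ℕ, ρ ^ n * ∑' k : ℕ, (if k ≤ n then a k else 0) = (1 - ρ)⁻¹ * ∑' k : ℕ, ρ ^ k * a k :=
  calc ∑' n : ℕ, ρ ^ n * ∑' k : ℕ, (if k ≤ n then a k else 0)
      = ∑' n : ℕ, ∑' k : ℕ, (if k ≤ n then ρ ^ n * a k else 0) := by
        simp_rw [← ENNReal.tsum_mul_left, mul_ite, mul_zero]
    _ = ∑' k : ℕ, ∑' n : ℕ, (if k ≤ n then ρ ^ n * a k else 0) := ENNReal.tsum_comm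
    _ = ∑' k : ℕ, (∑' n : ℕ, if k ≤ n then ρ ^ n else 0) * a k := by
        simp_rw [← ENNReal.tsum_mul_right, ite_mul, zero_mul]
    _ = (1 - ρ)⁻¹ * ∑' k : ℕ, ρ ^ k * a k := by
        simp_rw [tsum_ite_le_pow, ← ENNReal.tsum_mul_left, mul_comm _ (1 - ρ)⁻¹, mul_assoc]

end ENNReal

theorem ofReal_two_rpow_mul_natCast (t : ℝ) (n : ℕ) :
    ENNReal.ofReal ((2 : ℝ) ^ (t * n)) = ENNReal.ofReal ((2 : ℝ) ^ t) ^ n := by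
  rw [Real.rpow_mul_natCast zero_le_two, ENNReal.ofReal_pow (by positivity)]

theorem ofReal_two_rpow_mul_rpow {q : ℝ} (hq : 0 ≤ q) (t x : ℝ) :
    ENNReal.ofReal ((2 : ℝ) ^ t * x) ^ q
      = ENNReal.ofReal ((2 : ℝ) ^ (t * q)) * ENNReal.ofReal x ^ q := by
  rw [ENNReal.ofReal_mul (by positivity), ENNReal.mul_rpow_of_nonneg _ _ hq,
    ENNReal.ofReal_rpow_of_nonneg (by positivity) hq, ← Real.rpow_mul zero_le_two]

theorem ofReal_two_rpow_pow_mul_rpow {q : ℝ} (hq : 0 ≤ q) (s s' x : ℝ) (k : ℕ) :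
    ENNReal.ofReal ((2 : ℝ) ^ (-(q * (s' - s)))) ^ k
        * ENNReal.ofReal ((2 : ℝ) ^ ((k : ℝ) * s') * x) ^ q
      = ENNReal.ofReal ((2 : ℝ) ^ ((k : ℝ) * s) * x) ^ q := by
  rw [ofReal_two_rpow_mul_rpow hq, ofReal_two_rpow_mul_rpow hq, ← mul_assoc,
    ← ofReal_two_rpow_mul_natCast, ← ENNReal.ofReal_mul (by positivity), ← Real.rpow_add two_pos]
  ring_nf

theorem sigmaNorm_ofReal_rpow {E : Type*} (N : E → ℝ) (s : ℝ) {q : ℝ} (hq : 0 < q) (f : ℕ → E) :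
    sigmaNorm N s (ENNReal.ofReal q) f ^ q
      = ∑' k : ℕ, ENNReal.ofReal ((2 : ℝ) ^ ((k : ℝ) * s) * N (f k)) ^ q := by
  rw [sigmaNorm, if_neg ENNReal.ofReal_ne_top, ENNReal.toReal_ofReal hq.le, ← ENNReal.rpow_mul,
    one_div_mul_cancel hq.ne', ENNReal.rpow_one]

theorem sigmaNorm_smoothS_ofReal_rpow {E : Type*} [Zero E] {N : E → ℝ} (hN : N 0 = 0) (s : ℝ)
    {q : ℝ} (hq : 0 < q) (n : ℕ) (f : ℕ → E) :
    sigmaNorm N s (ENNReal.ofReal q) (smoothS n f) ^ q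
      = ∑' k : ℕ, if k ≤ n then ENNReal.ofReal ((2 : ℝ) ^ ((k : ℝ) * s) * N (f k)) ^ q else 0 := by
  rw [sigmaNorm_ofReal_rpow N s hq]
  congr 1 with k
  by_cases hk : k ≤ n
  · simp only [smoothS, if_pos hk]
  · simp only [smoothS, if_neg hk, hN, mul_zero, ENNReal.ofReal_zero, ENNReal.zero_rpow_of_pos hq]

/-- Estimate (3.2): for `q ∈ [1,∞)` and `r < r'`, with `K = 1/(1 - 2^{-q(r'-r)})`,
one has `∑_n 2^{-qn(r'-r)} ‖S_n f‖_{Σ^{r'}_q}^q ≤ K ‖f‖_{Σ^r_q}^q` for all `f ∈ Σ^r_q(E)`. -/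
theorem sum_smoothS_sigmaNorm_pow_le {E : Type*} [AddCommGroup E] [Module ℝ E]
    (N : E → ℝ) (hN : IsPseudoNorm N) (q : ℝ) (hq : 1 ≤ q) (r r' : ℝ) (hrr' : r < r')
    (K : ℝ) (hK : K = 1 / (1 - (2 : ℝ) ^ (-(q * (r' - r))))) :
    0 < K ∧
    ∀ f : ℕ → E, memSigma N r (ENNReal.ofReal q) f →
      ∑' n : ℕ, ENNReal.ofReal ((2 : ℝ) ^ (-(q * (n : ℝ) * (r' - r)))) *
          sigmaNorm N r' (ENNReal.ofReal q) (smoothS n f) ^ q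
        ≤ ENNReal.ofReal K * sigmaNorm N r (ENNReal.ofReal q) f ^ q := by
  have hq0 : 0 < q := one_pos.trans_le hq
  have hρ : (2 : ℝ) ^ (-(q * (r' - r))) < 1 :=
    Real.rpow_lt_one_of_one_lt_of_neg one_lt_two (neg_neg_of_pos (mul_pos hq0 (sub_pos.mpr hrr')))
  have hK' : ENNReal.ofReal K = (1 - ENNReal.ofReal ((2 : ℝ) ^ (-(q * (r' - r)))))⁻¹ := by
    rw [hK, ← ENNReal.ofReal_one, ← ENNReal.ofReal_sub _ (by positivity),
      ← ENNReal.ofReal_inv_of_pos (sub_pos.mpr hρ), one_div]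
  have hweight (n : ℕ) : ENNReal.ofReal ((2 : ℝ) ^ (-(q * (n : ℝ) * (r' - r))))
      = ENNReal.ofReal ((2 : ℝ) ^ (-(q * (r' - r)))) ^ n := by
    rw [← ofReal_two_rpow_mul_natCast]; ring_nf
  have h0 : N 0 = 0 := (hN.eq_zero_iff 0).mpr rfl
  refine ⟨hK ▸ one_div_pos.mpr (sub_pos.mpr hρ), fun f _ => le_of_eq ?_⟩
  simp_rw [hweight, sigmaNorm_smoothS_ofReal_rpow h0 r' hq0, ENNReal.tsum_pow_mul_tsum_ite_le,
    ofReal_two_rpow_pow_mul_rpow hq0.le, ← sigmaNorm_ofReal_rpow N r hq0, hK']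
end

section
/- Let E and F be pseudo-normed real vector spaces, let s_0 < s < s_1 be real numbers, q ∈ [1,∞], r > 0, and let Φ : B_{s,q}(0,r) → Σ^{s_0}_∞(F) satisfy the weak Lipschitz estimate. Then for every f ∈ B_{s,q}(0,r): S_n f ∈ B_{s,q}(0,r) for every n (so Φ(S_n f) is well-defined), and Φ(S_n f) converges to Φ(f) in Σ^{s_0}_∞(F), i.e. ‖Φ(f) − Φ(S_n f)‖_{Σ^{s_0}_∞(F)} → 0 as n → ∞. -/
open Filter
open scoped ENNReal NNReal

/-!
Truncation only replaces terms by `0`, so `‖S_n f‖_{Σ^s_q} ≤ ‖f‖_{Σ^s_q}` and `S_n f` stays in the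
ball. By the weak Lipschitz estimate, `‖Φ f - Φ (S_n f)‖_{Σ^{s₀}_∞}` is at most `C₀` times
`‖f - S_n f‖_{Σ^{s₀}_1}`, the tail after index `n` of `∑_k 2^{ks₀} ‖f_k‖`. Since `s₀ < s`, this
series is dominated by the geometric series `∑_k 2^{k(s₀-s)}` times `sup_k 2^{ks} ‖f_k‖ ≤ ‖f‖_{Σ^s_q}`,
so it converges and its tails tend to `0`.
-/

open Topology

noncomputable section

namespace SigmaSpace

variable {E : Type*} (N : E → ℝ) (s : ℝ)

def sigmaTerm (f : ℕ → E) (k : ℕ) : ℝ≥0∞ :=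
  ENNReal.ofReal ((2 : ℝ) ^ ((k : ℝ) * s) * N (f k))

variable {N s}

theorem sigmaNorm_eq (q : ℝ≥0∞) (f : ℕ → E) :
    sigmaNorm N s q f = if q = ⊤ then ⨆ k, sigmaTerm N s f k
      else (∑' k, sigmaTerm N s f k ^ q.toReal) ^ (1 / q.toReal) :=
  rfl

theorem sigmaNorm_one (f : ℕ → E) : sigmaNorm N s 1 f = ∑' k, sigmaTerm N s f k := by
  simp [sigmaNorm_eq]

theorem sigmaNorm_mono {q : ℝ≥0∞} {f g : ℕ → E} (h : ∀ k, sigmaTerm N s f k ≤ sigmaTerm N s g k) :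
    sigmaNorm N s q f ≤ sigmaNorm N s q g := by
  rw [sigmaNorm_eq, sigmaNorm_eq]
  split_ifs
  · exact iSup_mono h
  · exact ENNReal.rpow_le_rpow
      (ENNReal.tsum_le_tsum fun k => ENNReal.rpow_le_rpow (h k) ENNReal.toReal_nonneg)
      (by positivity)

theorem sigmaTerm_le_sigmaNorm {q : ℝ≥0∞} (hq : q ≠ 0) (f : ℕ → E) (k : ℕ) :
    sigmaTerm N s f k ≤ sigmaNorm N s q f := by
  rw [sigmaNorm_eq]
  split_ifs with hqt
  · exact le_iSup (sigmaTerm N s f) k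
  · have hq_pos : 0 < q.toReal := ENNReal.toReal_pos hq hqt
    calc sigmaTerm N s f k = (sigmaTerm N s f k ^ q.toReal) ^ (1 / q.toReal) := by
          rw [← ENNReal.rpow_mul, mul_one_div_cancel hq_pos.ne', ENNReal.rpow_one]
      _ ≤ _ := ENNReal.rpow_le_rpow (ENNReal.le_tsum k) (by positivity)

theorem sigmaTerm_eq_pow_mul (s₀ : ℝ) (f : ℕ → E) (k : ℕ) :
    sigmaTerm N s₀ f k = ENNReal.ofReal ((2 : ℝ) ^ (s₀ - s)) ^ k * sigmaTerm N s f k := by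
  have hsplit : (2 : ℝ) ^ ((k : ℝ) * s₀) = ((2 : ℝ) ^ (s₀ - s)) ^ k * (2 : ℝ) ^ ((k : ℝ) * s) := by
    rw [← Real.rpow_mul_natCast (by norm_num), ← Real.rpow_add two_pos]
    ring_nf
  rw [sigmaTerm, sigmaTerm, hsplit, mul_assoc, ENNReal.ofReal_mul (by positivity),
    ENNReal.ofReal_pow (by positivity)]

/-- The embedding `Σ^s_q ⊆ Σ^{s₀}_1`. Informative only for `s₀ < s`: otherwise truncated
subtraction makes the constant `0⁻¹ = ⊤`. -/
theorem sigmaNorm_one_le (s₀ : ℝ) {q : ℝ≥0∞} (hq : q ≠ 0) (f : ℕ → E) :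
    sigmaNorm N s₀ 1 f ≤ (1 - ENNReal.ofReal ((2 : ℝ) ^ (s₀ - s)))⁻¹ * sigmaNorm N s q f := by
  rw [sigmaNorm_one, ← ENNReal.tsum_geometric, ← ENNReal.tsum_mul_right]
  refine ENNReal.tsum_le_tsum fun k => ?_
  rw [sigmaTerm_eq_pow_mul s₀]
  gcongr
  exact sigmaTerm_le_sigmaNorm hq f k

theorem sigmaNorm_one_ne_top_of_lt {s₀ : ℝ} (hs : s₀ < s) {q : ℝ≥0∞} (hq : q ≠ 0) {f : ℕ → E}
    (hf : sigmaNorm N s q f ≠ ⊤) : sigmaNorm N s₀ 1 f ≠ ⊤ := by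
  have hc : ENNReal.ofReal ((2 : ℝ) ^ (s₀ - s)) < 1 := by
    rw [ENNReal.ofReal_lt_one]
    exact Real.rpow_lt_one_of_one_lt_of_neg one_lt_two (by linarith)
  refine ne_top_of_le_ne_top ?_ (sigmaNorm_one_le (s := s) s₀ hq f)
  exact ENNReal.mul_ne_top (ENNReal.inv_ne_top.mpr (tsub_pos_of_lt hc).ne') hf

theorem sigmaTerm_smoothS_le [Zero E] (h0 : N 0 = 0) (n : ℕ) (f : ℕ → E) (k : ℕ) :
    sigmaTerm N s (smoothS n f) k ≤ sigmaTerm N s f k := by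
  by_cases hk : k ≤ n <;> simp [sigmaTerm, smoothS, hk, h0]

theorem sigmaNorm_smoothS_le [Zero E] (h0 : N 0 = 0) {q : ℝ≥0∞} (n : ℕ) (f : ℕ → E) :
    sigmaNorm N s q (smoothS n f) ≤ sigmaNorm N s q f :=
  sigmaNorm_mono (sigmaTerm_smoothS_le h0 n f)

theorem memSigma_smoothS [Zero E] (h0 : N 0 = 0) {q : ℝ≥0∞} (n : ℕ) {f : ℕ → E}
    (hf : memSigma N s q f) : memSigma N s q (smoothS n f) := by
  unfold memSigma at hf ⊢
  split_ifs at hf ⊢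
  · refine tendsto_const_nhds.congr' ?_
    filter_upwards [eventually_gt_atTop n] with k hk
    simp [smoothS, Nat.not_le.mpr hk, h0]
  · exact (sigmaNorm_smoothS_le h0 n f).trans_lt hf

theorem sigmaNorm_one_sub_smoothS [AddGroup E] (h0 : N 0 = 0) (n : ℕ) (f : ℕ → E) :
    sigmaNorm N s 1 (f - smoothS n f) = ∑' i, sigmaTerm N s f (i + (n + 1)) := by
  have hterm : sigmaTerm N s (f - smoothS n f) = fun k => if k ≤ n then 0 else sigmaTerm N s f k := by
    ext k
    by_cases hk : k ≤ n <;> simp [sigmaTerm, smoothS, hk, h0]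
  rw [sigmaNorm_one, hterm, ← (add_left_injective (n + 1)).tsum_eq]
  · exact tsum_congr fun i => if_neg (by omega)
  · intro k hk
    have hnk : n < k := by
      by_contra! hkn
      exact hk (if_pos hkn)
    exact ⟨k - (n + 1), Nat.sub_add_cancel hnk⟩

theorem tendsto_sigmaNorm_one_sub_smoothS [AddGroup E] (h0 : N 0 = 0) {f : ℕ → E}
    (hf : sigmaNorm N s 1 f ≠ ⊤) :
    Tendsto (fun n => sigmaNorm N s 1 (f - smoothS n f)) atTop (𝓝 0) := by
  simp_rw [sigmaNorm_one_sub_smoothS h0]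
  rw [sigmaNorm_one] at hf
  exact (ENNReal.tendsto_sum_nat_add _ hf).comp (tendsto_add_atTop_nat 1)

end SigmaSpace

end

open SigmaSpace

theorem tendsto_Phi_smoothS_weakLipschitz_general
    {E F : Type*} [AddCommGroup E] [Module ℝ E] [AddCommGroup F] [Module ℝ F]
    (NE : E → ℝ) (NF : F → ℝ) (hNE : IsPseudoNorm NE)
    (s₀ s : ℝ) (hs₀ : s₀ < s)
    (q : ℝ≥0∞) (hq : 1 ≤ q) (r : ℝ)
    (Φ : (ℕ → E) → (ℕ → F))
    -- weak Lipschitz estimate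
    (C₀ : ℝ)
    (hlip : ∀ v w, memSigma NE s q v → sigmaNorm NE s q v < ENNReal.ofReal r →
      memSigma NE s q w → sigmaNorm NE s q w < ENNReal.ofReal r →
      sigmaNorm NF s₀ ⊤ (Φ v - Φ w) ≤ ENNReal.ofReal C₀ * sigmaNorm NE s₀ 1 (v - w))
    (f : ℕ → E) (hfmem : memSigma NE s q f) (hfball : sigmaNorm NE s q f < ENNReal.ofReal r) :
    (∀ n : ℕ, memSigma NE s q (smoothS n f) ∧
      sigmaNorm NE s q (smoothS n f) < ENNReal.ofReal r) ∧
    Tendsto (fun n : ℕ => sigmaNorm NF s₀ ⊤ (Φ f - Φ (smoothS n f))) atTop (nhds 0) := by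
  have h0 : NE 0 = 0 := (hNE.eq_zero_iff 0).mpr rfl
  have hmem n : memSigma NE s q (smoothS n f) := memSigma_smoothS h0 n hfmem
  have hball n : sigmaNorm NE s q (smoothS n f) < ENNReal.ofReal r :=
    (sigmaNorm_smoothS_le h0 n f).trans_lt hfball
  refine ⟨fun n => ⟨hmem n, hball n⟩, ?_⟩
  have hf₀ : sigmaNorm NE s₀ 1 f ≠ ⊤ :=
    sigmaNorm_one_ne_top_of_lt hs₀ (zero_lt_one.trans_le hq).ne' (ne_top_of_lt hfball)
  have hbound : Tendsto (fun n => ENNReal.ofReal C₀ * sigmaNorm NE s₀ 1 (f - smoothS n f))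
      atTop (𝓝 0) := by
    simpa using ENNReal.Tendsto.const_mul (tendsto_sigmaNorm_one_sub_smoothS h0 hf₀)
      (Or.inr ENNReal.ofReal_ne_top)
  exact tendsto_of_tendsto_of_tendsto_of_le_of_le tendsto_const_nhds hbound (fun _ => zero_le)
    fun n => hlip f (smoothS n f) hfmem hfball (hmem n) (hball n)

/-- Lemma 3.8: if `Φ : B_{s,q}(0,r) ⊆ Σ^s_q(E) → Σ^{s₀}_∞(F)` satisfies the weak
Lipschitz estimate, then for every `f ∈ B_{s,q}(0,r)` each `S_n f` also lies in
`B_{s,q}(0,r)` (so that `Φ(S_n f)` is well-defined) and `Φ(S_n f) → Φ(f)` in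
`Σ^{s₀}_∞(F)`. -/
theorem tendsto_Phi_smoothS_weakLipschitz
    {E F : Type*} [AddCommGroup E] [Module ℝ E] [AddCommGroup F] [Module ℝ F]
    (NE : E → ℝ) (NF : F → ℝ) (hNE : IsPseudoNorm NE) (hNF : IsPseudoNorm NF)
    (s₀ s s₁ : ℝ) (hs₀ : s₀ < s) (hs₁ : s < s₁)
    (q : ℝ≥0∞) (hq : 1 ≤ q) (r : ℝ) (hr : 0 < r)
    (Φ : (ℕ → E) → (ℕ → F))
    -- Φ maps the ball B_{s,q}(0,r) into Σ^{s₀}_∞(F)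
    (hΦmem : ∀ v, memSigma NE s q v → sigmaNorm NE s q v < ENNReal.ofReal r →
      memSigma NF s₀ ⊤ (Φ v))
    -- weak Lipschitz estimate
    (C₀ : ℝ) (hC₀ : 0 < C₀)
    (hlip : ∀ v w, memSigma NE s q v → sigmaNorm NE s q v < ENNReal.ofReal r →
      memSigma NE s q w → sigmaNorm NE s q w < ENNReal.ofReal r →
      sigmaNorm NF s₀ ⊤ (Φ v - Φ w) ≤ ENNReal.ofReal C₀ * sigmaNorm NE s₀ 1 (v - w))
    (f : ℕ → E) (hfmem : memSigma NE s q f) (hfball : sigmaNorm NE s q f < ENNReal.ofReal r) :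
    (∀ n : ℕ, memSigma NE s q (smoothS n f) ∧
      sigmaNorm NE s q (smoothS n f) < ENNReal.ofReal r) ∧
    Tendsto (fun n : ℕ => sigmaNorm NF s₀ ⊤ (Φ f - Φ (smoothS n f))) atTop (nhds 0) :=
  tendsto_Phi_smoothS_weakLipschitz_general NE NF hNE s₀ s hs₀ q hq r Φ C₀ hlip f hfmem hfball
end

section
/- Let (E,‖·‖_E) be a pseudo-normed real vector space, s < s_1 real numbers, q ∈ [1,∞], and f ∈ Σ^s_q(E). Define γ_n := 2^{−n(s_1−s)} ‖S_n f‖_{Σ^{s_1}_1} = 2^{−n(s_1−s)} ∑_{k=0}^n 2^{k s_1}‖f_k‖_E. Then the sequence γ = (γ_n) satisfies (1 − 2^{s−s_1}) ‖γ‖_{ℓ^q(ℕ)} ≤ ‖f‖_{Σ^s_q} ≤ ‖γ‖_{ℓ^q(ℕ)}; moreover, if q = ∞ then lim_{n→∞} γ_n = 0. -/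
/-!
Write `a_k = 2^{ks}‖f_k‖_E` and `r = 2^{s-s₁} < 1`. Then `γ_n = ∑_{i+k=n} r^i a_k` is the
convolution of `a` with the geometric sequence `(r^i)`, whose `ℓ¹` norm is `(1 - r)⁻¹`.
The term `i = 0` gives `a ≤ γ`, hence the upper bound. Young's inequality
`‖w ⋆ a‖_{ℓ^q} ≤ ‖w‖_{ℓ¹} ‖a‖_{ℓ^q}` gives the lower bound; for `q < ∞` it follows from the
weighted Hölder inequality `(∑_{i+k=n} w_i a_k)^q ≤ ‖w‖_{ℓ¹}^{q-1} ∑_{i+k=n} w_i a_k^q` and the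
Cauchy product formula. Finally, by Tannery's theorem the convolution of a summable sequence with
a null sequence is null.
-/

open Filter
open scoped ENNReal NNReal

/-- The `ℓ^q(ℕ)` norm of a real sequence. -/
noncomputable def lqNormN (q : ℝ≥0∞) (γ : ℕ → ℝ) : ℝ≥0∞ :=
  if q = ⊤ then ⨆ n : ℕ, ENNReal.ofReal |γ n|
  else (∑' n : ℕ, ENNReal.ofReal |γ n| ^ q.toReal) ^ (1 / q.toReal)

open Finset Topology

namespace ENNReal

theorem tsum_sum_antidiagonal_eq_tsum_prod (h : ℕ × ℕ → ℝ≥0∞) :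
    ∑' n, ∑ x ∈ antidiagonal n, h x = ∑' x : ℕ × ℕ, h x := by
  rw [← HasAntidiagonal.sigmaAntidiagonalEquivProd.tsum_eq, ENNReal.tsum_sigma']
  simp [HasAntidiagonal.sigmaAntidiagonalEquivProd, Finset.sum_attach]

theorem tsum_sum_antidiagonal_mul (u v : ℕ → ℝ≥0∞) :
    ∑' n, ∑ x ∈ antidiagonal n, u x.1 * v x.2 = (∑' i, u i) * ∑' j, v j := by
  rw [tsum_sum_antidiagonal_eq_tsum_prod, ENNReal.tsum_prod (f := fun i j => u i * v j),
    ← ENNReal.tsum_mul_right]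
  simp_rw [ENNReal.tsum_mul_left]

theorem sum_antidiagonal_fst_le_tsum (w : ℕ → ℝ≥0∞) (n : ℕ) :
    ∑ x ∈ antidiagonal n, w x.1 ≤ ∑' i, w i := by
  rw [Nat.sum_antidiagonal_eq_sum_range_succ_mk]
  exact ENNReal.sum_le_tsum _

theorem sum_antidiagonal_mul_le_tsum_mul_iSup (w u : ℕ → ℝ≥0∞) (n : ℕ) :
    ∑ x ∈ antidiagonal n, w x.1 * u x.2 ≤ (∑' i, w i) * ⨆ k, u k :=
  calc ∑ x ∈ antidiagonal n, w x.1 * u x.2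
      ≤ ∑ x ∈ antidiagonal n, w x.1 * ⨆ k, u k := by gcongr; exact le_iSup u _
    _ = (∑ x ∈ antidiagonal n, w x.1) * ⨆ k, u k := (sum_mul ..).symm
    _ ≤ (∑' i, w i) * ⨆ k, u k := by gcongr; exact sum_antidiagonal_fst_le_tsum w n

theorem sum_antidiagonal_mul_rpow_le {p : ℝ} (hp : 1 ≤ p) (w u : ℕ → ℝ≥0∞) (n : ℕ) :
    (∑ x ∈ antidiagonal n, w x.1 * u x.2) ^ p ≤
      (∑' i, w i) ^ (p - 1) * ∑ x ∈ antidiagonal n, w x.1 * u x.2 ^ p := by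
  have hp₀ : 0 < p := by linarith
  calc (∑ x ∈ antidiagonal n, w x.1 * u x.2) ^ p
      ≤ ((∑ x ∈ antidiagonal n, w x.1) ^ (1 - p⁻¹) *
          (∑ x ∈ antidiagonal n, w x.1 * u x.2 ^ p) ^ p⁻¹) ^ p := by
        gcongr
        exact inner_le_weight_mul_Lp_of_nonneg _ hp (fun x : ℕ × ℕ => w x.1)
          (fun x : ℕ × ℕ => u x.2)
    _ = (∑ x ∈ antidiagonal n, w x.1) ^ (p - 1) * ∑ x ∈ antidiagonal n, w x.1 * u x.2 ^ p := by
        rw [mul_rpow_of_nonneg _ _ hp₀.le, ← rpow_mul, ← rpow_mul,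
          inv_mul_cancel₀ hp₀.ne', rpow_one, sub_mul, one_mul, inv_mul_cancel₀ hp₀.ne']
    _ ≤ (∑' i, w i) ^ (p - 1) * ∑ x ∈ antidiagonal n, w x.1 * u x.2 ^ p := by
        gcongr
        exact sum_antidiagonal_fst_le_tsum w n

theorem le_sum_antidiagonal_pow_mul (R : ℝ≥0∞) (u : ℕ → ℝ≥0∞) (n : ℕ) :
    u n ≤ ∑ x ∈ antidiagonal n, R ^ x.1 * u x.2 := by
  simpa using single_le_sum (f := fun x : ℕ × ℕ => R ^ x.1 * u x.2) (fun _ _ => zero_le)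
    (mem_antidiagonal.2 (zero_add n) : ((0, n) : ℕ × ℕ) ∈ antidiagonal n)

end ENNReal

noncomputable def lqENorm (q : ℝ≥0∞) (u : ℕ → ℝ≥0∞) : ℝ≥0∞ :=
  if q = ⊤ then ⨆ n, u n else (∑' n, u n ^ q.toReal) ^ (1 / q.toReal)

theorem lqENorm_mono (q : ℝ≥0∞) {u v : ℕ → ℝ≥0∞} (h : u ≤ v) : lqENorm q u ≤ lqENorm q v := by
  unfold lqENorm
  split_ifs
  · exact iSup_mono h
  · gcongr with n
    exact h n

theorem lqENorm_sum_antidiagonal_mul_le {q : ℝ≥0∞} (hq : 1 ≤ q) (w u : ℕ → ℝ≥0∞) :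
    lqENorm q (fun n => ∑ x ∈ antidiagonal n, w x.1 * u x.2) ≤ (∑' i, w i) * lqENorm q u := by
  unfold lqENorm
  split_ifs with hq_top
  · exact iSup_le (ENNReal.sum_antidiagonal_mul_le_tsum_mul_iSup w u)
  set p := q.toReal
  have hp : 1 ≤ p := by simpa using ENNReal.toReal_mono hq_top hq
  calc (∑' n, (∑ x ∈ antidiagonal n, w x.1 * u x.2) ^ p) ^ (1 / p)
      ≤ (∑' n, (∑' i, w i) ^ (p - 1) * ∑ x ∈ antidiagonal n, w x.1 * u x.2 ^ p) ^ (1 / p) := by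
        gcongr with n
        exact ENNReal.sum_antidiagonal_mul_rpow_le hp w u n
    _ = ((∑' i, w i) ^ p * ∑' k, u k ^ p) ^ (1 / p) := by
        rw [ENNReal.tsum_mul_left, ENNReal.tsum_sum_antidiagonal_mul w (fun k => u k ^ p),
          ← mul_assoc]
        congr 3
        conv_lhs => enter [2]; rw [← ENNReal.rpow_one (∑' i, w i)]
        rw [← ENNReal.rpow_add_of_nonneg _ _ (by linarith) zero_le_one, sub_add_cancel]
    _ = (∑' i, w i) * (∑' k, u k ^ p) ^ (1 / p) := by
        rw [ENNReal.mul_rpow_of_nonneg _ _ (by positivity), ← ENNReal.rpow_mul,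
          mul_one_div_cancel (by positivity), ENNReal.rpow_one]

theorem one_sub_mul_lqENorm_sum_antidiagonal_pow_mul_le {q : ℝ≥0∞} (hq : 1 ≤ q) {R : ℝ≥0∞}
    (hR : R < 1) (u : ℕ → ℝ≥0∞) :
    (1 - R) * lqENorm q (fun n => ∑ x ∈ antidiagonal n, R ^ x.1 * u x.2) ≤ lqENorm q u :=
  calc (1 - R) * lqENorm q (fun n => ∑ x ∈ antidiagonal n, R ^ x.1 * u x.2)
      ≤ (1 - R) * ((1 - R)⁻¹ * lqENorm q u) := by
        rw [← ENNReal.tsum_geometric]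
        gcongr
        exact lqENorm_sum_antidiagonal_mul_le hq _ _
    _ = lqENorm q u := by
        rw [← mul_assoc, ENNReal.mul_inv_cancel (tsub_pos_of_lt hR).ne' (by simp), one_mul]

theorem lqNormN_eq_lqENorm_ofReal (q : ℝ≥0∞) {γ : ℕ → ℝ} (hγ : ∀ n, 0 ≤ γ n) :
    lqNormN q γ = lqENorm q (fun n => ENNReal.ofReal (γ n)) := by
  simp only [lqNormN, lqENorm, abs_of_nonneg (hγ _)]

theorem lqNormN_sum_antidiagonal_pow_mul (q : ℝ≥0∞) {r : ℝ} (hr : 0 ≤ r) {a : ℕ → ℝ}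
    (ha : ∀ k, 0 ≤ a k) :
    lqNormN q (fun n => ∑ x ∈ antidiagonal n, r ^ x.1 * a x.2) =
      lqENorm q (fun n => ∑ x ∈ antidiagonal n,
        ENNReal.ofReal r ^ x.1 * ENNReal.ofReal (a x.2)) := by
  have h_term : ∀ x : ℕ × ℕ, 0 ≤ r ^ x.1 * a x.2 := fun x => mul_nonneg (pow_nonneg hr _) (ha _)
  rw [lqNormN_eq_lqENorm_ofReal q fun n => sum_nonneg fun x _ => h_term x]
  simp only [ENNReal.ofReal_sum_of_nonneg fun x _ => h_term x,
    ENNReal.ofReal_mul (pow_nonneg hr _), ENNReal.ofReal_pow hr]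

theorem tendsto_sum_antidiagonal_mul_nhds_zero {w a : ℕ → ℝ} (hw : Summable w)
    (ha : Tendsto a atTop (𝓝 0)) :
    Tendsto (fun n => ∑ x ∈ antidiagonal n, w x.1 * a x.2) atTop (𝓝 0) := by
  obtain ⟨C, hC⟩ := (Metric.isBounded_range_of_tendsto a ha).exists_norm_le
  have h_tsum : ∀ n, ∑ x ∈ antidiagonal n, w x.1 * a x.2 =
      ∑' i, if i ≤ n then w i * a (n - i) else 0 := by
    intro n
    rw [Nat.sum_antidiagonal_eq_sum_range_succ (fun i k => w i * a k),
      tsum_eq_sum (s := range (n + 1)) fun i hi => if_neg (by simpa [Nat.lt_succ_iff] using hi)]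
    exact sum_congr rfl fun i hi => (if_pos (by simpa [Nat.lt_succ_iff] using hi)).symm
  have h_term : ∀ i, Tendsto (fun n => if i ≤ n then w i * a (n - i) else 0) atTop (𝓝 0) := by
    intro i
    have h_shift : Tendsto (fun n => w i * a (n - i)) atTop (𝓝 0) := by
      simpa using (ha.comp (tendsto_sub_atTop_nat i)).const_mul (w i)
    exact h_shift.congr' (eventually_atTop.2 ⟨i, fun n hn => (if_pos hn).symm⟩)
  have h_bound : ∀ n i, ‖if i ≤ n then w i * a (n - i) else 0‖ ≤ |w i| * C := by
    intro n i
    split_ifs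
    · rw [norm_mul, Real.norm_eq_abs]
      exact mul_le_mul_of_nonneg_left (hC _ ⟨_, rfl⟩) (abs_nonneg _)
    · simpa using mul_nonneg (abs_nonneg (w i)) ((norm_nonneg _).trans (hC _ ⟨0, rfl⟩))
  simp_rw [h_tsum]
  simpa using tendsto_tsum_of_dominated_convergence (hw.abs.mul_right C) h_term
    (Eventually.of_forall h_bound)

theorem rpow_neg_mul_sum_range_eq_sum_antidiagonal {c : ℝ} (hc : 0 < c) (s s₁ : ℝ) (b : ℕ → ℝ)
    (n : ℕ) :
    c ^ (-((n : ℝ) * (s₁ - s))) * ∑ k ∈ range (n + 1), c ^ ((k : ℝ) * s₁) * b k =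
      ∑ x ∈ antidiagonal n, (c ^ (s - s₁)) ^ x.1 * (c ^ ((x.2 : ℝ) * s) * b x.2) := by
  rw [← Nat.sum_antidiagonal_swap]
  simp only [Prod.fst_swap, Prod.snd_swap]
  rw [Nat.sum_antidiagonal_eq_sum_range_succ
    (fun k i => (c ^ (s - s₁)) ^ i * (c ^ ((k : ℝ) * s) * b k)), mul_sum]
  refine sum_congr rfl fun k hk => ?_
  have hkn : k ≤ n := Nat.lt_succ_iff.mp (mem_range.mp hk)
  rw [← mul_assoc, ← mul_assoc, ← Real.rpow_natCast, ← Real.rpow_mul hc.le, ← Real.rpow_add hc,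
    ← Real.rpow_add hc, Nat.cast_sub hkn]
  ring_nf

/-- Lemma 3.9 (i): for `f ∈ Σ^s_q(E)` and
`γ_n := 2^{-n(s₁-s)} ‖S_n f‖_{Σ^{s₁}_1} = 2^{-n(s₁-s)} ∑_{k≤n} 2^{k s₁}‖f_k‖_E`,
one has `(1-2^{s-s₁})‖γ‖_{ℓ^q} ≤ ‖f‖_{Σ^s_q} ≤ ‖γ‖_{ℓ^q}`; moreover `γ_n → 0` if `q = ∞`. -/
theorem frequency_envelope_equiv {E : Type*} [AddCommGroup E] [Module ℝ E]
    (N : E → ℝ) (hN : IsPseudoNorm N) (s s₁ : ℝ) (hss₁ : s < s₁)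
    (q : ℝ≥0∞) (hq : 1 ≤ q) (f : ℕ → E) (hf : memSigma N s q f)
    (γ : ℕ → ℝ)
    (hγ : ∀ n : ℕ, γ n = (2 : ℝ) ^ (-((n : ℝ) * (s₁ - s))) *
      ∑ k ∈ Finset.range (n + 1), (2 : ℝ) ^ ((k : ℝ) * s₁) * N (f k)) :
    ENNReal.ofReal (1 - (2 : ℝ) ^ (s - s₁)) * lqNormN q γ ≤ sigmaNorm N s q f ∧
    sigmaNorm N s q f ≤ lqNormN q γ ∧
    (q = ⊤ → Tendsto γ atTop (nhds 0)) := by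
  set a : ℕ → ℝ := fun k => (2 : ℝ) ^ ((k : ℝ) * s) * N (f k)
  set r : ℝ := (2 : ℝ) ^ (s - s₁)
  have ha : ∀ k, 0 ≤ a k := fun k => mul_nonneg (by positivity) (hN.nonneg _)
  have hr₀ : 0 ≤ r := by positivity
  have hr₁ : r < 1 := Real.rpow_lt_one_of_one_lt_of_neg one_lt_two (by linarith)
  obtain rfl : γ = fun n => ∑ x ∈ antidiagonal n, r ^ x.1 * a x.2 :=
    funext fun n => (hγ n).trans (rpow_neg_mul_sum_range_eq_sum_antidiagonal two_pos s s₁ _ n)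
  set A : ℕ → ℝ≥0∞ := fun k => ENNReal.ofReal (a k)
  have h_norm_f : sigmaNorm N s q f = lqENorm q A := rfl
  rw [lqNormN_sum_antidiagonal_pow_mul q hr₀ ha, h_norm_f]
  refine ⟨?_, ?_, fun hq_top => ?_⟩
  · rw [ENNReal.ofReal_sub _ hr₀, ENNReal.ofReal_one]
    exact one_sub_mul_lqENorm_sum_antidiagonal_pow_mul_le hq (ENNReal.ofReal_lt_one.2 hr₁) A
  · exact lqENorm_mono q fun n => ENNReal.le_sum_antidiagonal_pow_mul _ A n
  · rw [memSigma, if_pos hq_top] at hf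
    exact tendsto_sum_antidiagonal_mul_nhds_zero (summable_geometric_of_lt_one hr₀ hr₁) hf
end

section
/- Let E and F be pseudo-normed real vector spaces, s_0 < s < s_1 real numbers, q ∈ [1,∞], r > 0, and let Φ : B_{s,q}(0,r) → Σ^{s_0}_∞(F) satisfy the weak Lipschitz and tame estimates with constants C₀, C₁. Set κ = min(s_1−s, s−s_0) and C = max{C₀, (1+2^{s_1−s})C₁}. For f ∈ B_{s,q}(0,r) set γ_n := 2^{−n(s_1−s)} ∑_{k=0}^n 2^{k s_1}‖f_k‖_E. Then for all n, m ∈ ℕ: 2^{ms} ‖(Φ(S_{n+1}f) − Φ(S_n f))_m‖_F ≤ C 2^{−κ|m−n|} (γ_n + γ_{n+1}). -/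
open Filter
open scoped ENNReal NNReal

set_option maxHeartbeats 1000000 in
/-- Lemma 3.10: with `κ = min(s₁-s, s-s₀)` and `C = max(C₀, (1+2^{s₁-s})C₁)`, for
`f ∈ B_{s,q}(0,r)` and `γ_n := 2^{-n(s₁-s)} ∑_{k≤n} 2^{k s₁}‖f_k‖_E`, one has, for all
`n, m ∈ ℕ`, `2^{ms} ‖(Φ(S_{n+1}f) - Φ(S_n f))_m‖_F ≤ C 2^{-κ|m-n|} (γ_n + γ_{n+1})`. -/
theorem Phi_smoothS_exponential_decay
    {E F : Type*} [AddCommGroup E] [Module ℝ E] [AddCommGroup F] [Module ℝ F]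
    (NE : E → ℝ) (NF : F → ℝ) (hNE : IsPseudoNorm NE) (hNF : IsPseudoNorm NF)
    (s₀ s s₁ : ℝ) (hs₀ : s₀ < s) (hs₁ : s < s₁)
    (q : ℝ≥0∞) (hq : 1 ≤ q) (r : ℝ) (hr : 0 < r)
    (Φ : (ℕ → E) → (ℕ → F))
    (hΦmem : ∀ v, memSigma NE s q v → sigmaNorm NE s q v < ENNReal.ofReal r →
      memSigma NF s₀ ⊤ (Φ v))
    (C₀ : ℝ) (hC₀ : 0 < C₀)
    (hlip : ∀ v w, memSigma NE s q v → sigmaNorm NE s q v < ENNReal.ofReal r →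
      memSigma NE s q w → sigmaNorm NE s q w < ENNReal.ofReal r →
      sigmaNorm NF s₀ ⊤ (Φ v - Φ w) ≤ ENNReal.ofReal C₀ * sigmaNorm NE s₀ 1 (v - w))
    (C₁ : ℝ) (hC₁ : 0 < C₁)
    (htame : ∀ v, (∀ σ : ℝ, memSigma NE σ 1 v) →
      memSigma NE s q v → sigmaNorm NE s q v < ENNReal.ofReal r →
      sigmaNorm NF s₁ ⊤ (Φ v) ≤ ENNReal.ofReal C₁ * sigmaNorm NE s₁ 1 v)
    (κ C : ℝ) (hκ : κ = min (s₁ - s) (s - s₀))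
    (hC : C = max C₀ ((1 + (2 : ℝ) ^ (s₁ - s)) * C₁))
    (f : ℕ → E) (hfmem : memSigma NE s q f) (hfball : sigmaNorm NE s q f < ENNReal.ofReal r)
    (γ : ℕ → ℝ)
    (hγ : ∀ n : ℕ, γ n = (2 : ℝ) ^ (-((n : ℝ) * (s₁ - s))) *
      ∑ k ∈ Finset.range (n + 1), (2 : ℝ) ^ ((k : ℝ) * s₁) * NE (f k)) :
    ∀ n m : ℕ,
      (2 : ℝ) ^ ((m : ℝ) * s) * NF ((Φ (smoothS (n + 1) f) - Φ (smoothS n f)) m)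
        ≤ C * (2 : ℝ) ^ (-(κ * |(m : ℝ) - (n : ℝ)|)) * (γ n + γ (n + 1)) := by
  
  classical
  have hNE0 : NE 0 = 0 := (hNE.eq_zero_iff 0).mpr rfl
  have h2 : (0:ℝ) < 2 := by norm_num
  have hrp : ∀ x : ℝ, (0:ℝ) < (2:ℝ) ^ x := fun x => Real.rpow_pos_of_pos h2 x
  have hmul : ∀ a b : ℝ, (2:ℝ) ^ a * (2:ℝ) ^ b = (2:ℝ) ^ (a + b) :=
    fun a b => (Real.rpow_add h2 a b).symm
  have hmono : ∀ a b : ℝ, a ≤ b → (2:ℝ) ^ a ≤ (2:ℝ) ^ b :=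
    fun a b h => Real.rpow_le_rpow_of_exponent_le (by norm_num) h
  -- properties of smoothS
  have hsval : ∀ (j k : ℕ), NE (smoothS j f k) ≤ NE (f k) := by
    intro j k
    by_cases h : k ≤ j
    · simp [smoothS, h]
    · simp [smoothS, h, hNE0, hNE.nonneg]
  have hterm_le : ∀ (σ : ℝ) (j k : ℕ),
      (2:ℝ) ^ ((k:ℝ) * σ) * NE (smoothS j f k) ≤ (2:ℝ) ^ ((k:ℝ) * σ) * NE (f k) :=
    fun σ j k => mul_le_mul_of_nonneg_left (hsval j k) (hrp _).le
  have hsmooth_le : ∀ j : ℕ, sigmaNorm NE s q (smoothS j f) ≤ sigmaNorm NE s q f := by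
    intro j
    unfold sigmaNorm
    split_ifs with h
    · exact iSup_mono fun k => ENNReal.ofReal_le_ofReal (hterm_le s j k)
    · refine ENNReal.rpow_le_rpow ?_ (by positivity)
      exact ENNReal.tsum_le_tsum fun k =>
        ENNReal.rpow_le_rpow (ENNReal.ofReal_le_ofReal (hterm_le s j k)) ENNReal.toReal_nonneg
  have hsmooth_ball : ∀ j : ℕ, sigmaNorm NE s q (smoothS j f) < ENNReal.ofReal r :=
    fun j => lt_of_le_of_lt (hsmooth_le j) hfball
  have hsmooth_mem : ∀ j : ℕ, memSigma NE s q (smoothS j f) := by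
    intro j
    unfold memSigma
    split_ifs with h
    · have he : (fun k : ℕ => (2:ℝ) ^ ((k:ℝ) * s) * NE (smoothS j f k)) =ᶠ[atTop]
          (fun _ => (0:ℝ)) := by
        filter_upwards [eventually_ge_atTop (j+1)] with k hk
        have hk' : ¬ k ≤ j := by omega
        simp [smoothS, hk', hNE0]
      exact Tendsto.congr' he.symm tendsto_const_nhds
    · exact lt_trans (hsmooth_ball j) ENNReal.ofReal_lt_top
  have hsig1 : ∀ (σ : ℝ) (j : ℕ), sigmaNorm NE σ 1 (smoothS j f)
      = ENNReal.ofReal (∑ k ∈ Finset.range (j+1), (2:ℝ) ^ ((k:ℝ) * σ) * NE (f k)) := by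
    intro σ j
    have h1 : sigmaNorm NE σ 1 (smoothS j f)
        = ∑' k : ℕ, ENNReal.ofReal ((2:ℝ) ^ ((k:ℝ) * σ) * NE (smoothS j f k)) := by
      simp [sigmaNorm, ENNReal.one_ne_top]
    rw [h1, tsum_eq_sum (s := Finset.range (j+1))
      (by
        intro k hk
        have hk' : ¬ k ≤ j := by simp [Finset.mem_range] at hk; omega
        simp [smoothS, hk', hNE0])]
    rw [← ENNReal.ofReal_sum_of_nonneg (fun k _ => mul_nonneg (hrp _).le (hNE.nonneg _))]
    congr 1
    refine Finset.sum_congr rfl fun k hk => ?_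
    have hk' : k ≤ j := by simpa [Finset.mem_range, Nat.lt_succ_iff] using hk
    simp [smoothS, hk']
  have hsmooth_all : ∀ (j : ℕ) (σ : ℝ), memSigma NE σ 1 (smoothS j f) := by
    intro j σ
    have h1 : memSigma NE σ 1 (smoothS j f) ↔ sigmaNorm NE σ 1 (smoothS j f) < ⊤ := by
      simp [memSigma, ENNReal.one_ne_top]
    rw [h1, hsig1]
    exact ENNReal.ofReal_lt_top
  -- difference of truncations
  have hdiff : ∀ (n k : ℕ), (smoothS (n+1) f - smoothS n f) k
      = if k = n+1 then f (n+1) else 0 := by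
    intro n k
    simp only [Pi.sub_apply, smoothS]
    by_cases h1 : k ≤ n
    · have h2' : k ≤ n+1 := by omega
      have h3 : k ≠ n+1 := by omega
      simp [h1, h2', h3]
    · by_cases h2' : k = n+1
      · subst h2'
        simp [h1]
      · have h3 : ¬ k ≤ n+1 := by omega
        simp [h1, h2', h3]
  have hdnorm : ∀ n : ℕ, sigmaNorm NE s₀ 1 (smoothS (n+1) f - smoothS n f)
      = ENNReal.ofReal ((2:ℝ) ^ (((n:ℝ)+1) * s₀) * NE (f (n+1))) := by
    intro n
    have h1 : sigmaNorm NE s₀ 1 (smoothS (n+1) f - smoothS n f)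
        = ∑' k : ℕ, ENNReal.ofReal ((2:ℝ) ^ ((k:ℝ) * s₀)
            * NE ((smoothS (n+1) f - smoothS n f) k)) := by
      simp [sigmaNorm, ENNReal.one_ne_top]
    rw [h1, tsum_eq_single (n+1)
      (by
        intro k hk
        rw [hdiff n k]
        simp [hk, hNE0])]
    rw [hdiff n (n+1)]
    simp
  -- real-valued Lipschitz consequence
  have hlip' : ∀ n m : ℕ,
      (2:ℝ) ^ ((m:ℝ) * s₀) * NF ((Φ (smoothS (n+1) f) - Φ (smoothS n f)) m)
        ≤ C₀ * ((2:ℝ) ^ (((n:ℝ)+1) * s₀) * NE (f (n+1))) := by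
    intro n m
    have h := hlip (smoothS (n+1) f) (smoothS n f) (hsmooth_mem _) (hsmooth_ball _)
      (hsmooth_mem _) (hsmooth_ball _)
    rw [hdnorm n] at h
    have hsup : ENNReal.ofReal ((2:ℝ) ^ ((m:ℝ) * s₀)
          * NF ((Φ (smoothS (n+1) f) - Φ (smoothS n f)) m))
        ≤ sigmaNorm NF s₀ ⊤ (Φ (smoothS (n+1) f) - Φ (smoothS n f)) := by
      simp only [sigmaNorm, if_pos rfl]
      exact le_iSup (fun k : ℕ => ENNReal.ofReal ((2:ℝ) ^ ((k:ℝ) * s₀)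
        * NF ((Φ (smoothS (n+1) f) - Φ (smoothS n f)) k))) m
    have h3 := le_trans hsup h
    rw [← ENNReal.ofReal_mul hC₀.le] at h3
    exact (ENNReal.ofReal_le_ofReal_iff
      (mul_nonneg hC₀.le (mul_nonneg (hrp _).le (hNE.nonneg _)))).mp h3
  -- real-valued tame consequence
  have htame' : ∀ (j m : ℕ),
      (2:ℝ) ^ ((m:ℝ) * s₁) * NF (Φ (smoothS j f) m)
        ≤ C₁ * ∑ k ∈ Finset.range (j+1), (2:ℝ) ^ ((k:ℝ) * s₁) * NE (f k) := by
    intro j m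
    have h := htame (smoothS j f) (hsmooth_all j) (hsmooth_mem j) (hsmooth_ball j)
    rw [hsig1 s₁ j] at h
    have hsup : ENNReal.ofReal ((2:ℝ) ^ ((m:ℝ) * s₁) * NF (Φ (smoothS j f) m))
        ≤ sigmaNorm NF s₁ ⊤ (Φ (smoothS j f)) := by
      simp only [sigmaNorm, if_pos rfl]
      exact le_iSup (fun k : ℕ => ENNReal.ofReal ((2:ℝ) ^ ((k:ℝ) * s₁)
        * NF (Φ (smoothS j f) k))) m
    have h3 := le_trans hsup h
    rw [← ENNReal.ofReal_mul hC₁.le] at h3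
    exact (ENNReal.ofReal_le_ofReal_iff
      (mul_nonneg hC₁.le (Finset.sum_nonneg fun k _ =>
        mul_nonneg (hrp _).le (hNE.nonneg _)))).mp h3
  -- constants
  have hκ0 : 0 ≤ κ := by rw [hκ]; exact le_min (by linarith) (by linarith)
  have hκ1 : κ ≤ s₁ - s := by rw [hκ]; exact min_le_left _ _
  have hκ2 : κ ≤ s - s₀ := by rw [hκ]; exact min_le_right _ _
  have hC₀C : C₀ ≤ C := by rw [hC]; exact le_max_left _ _
  have hC₁C : C₁ ≤ C := by
    rw [hC]
    have : C₁ ≤ (1 + (2:ℝ) ^ (s₁ - s)) * C₁ := by nlinarith [hrp (s₁ - s), hC₁]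
    exact le_trans this (le_max_right _ _)
  have hC₁C' : (2:ℝ) ^ (s₁ - s) * C₁ ≤ C := by
    rw [hC]
    have : (2:ℝ) ^ (s₁ - s) * C₁ ≤ (1 + (2:ℝ) ^ (s₁ - s)) * C₁ := by nlinarith [hC₁]
    exact le_trans this (le_max_right _ _)
  intro n m
  set X := NF ((Φ (smoothS (n+1) f) - Φ (smoothS n f)) m) with hX
  have hX0 : 0 ≤ X := hNF.nonneg _
  have hGn0 : (0:ℝ) ≤ ∑ k ∈ Finset.range (n+1), (2:ℝ) ^ ((k:ℝ) * s₁) * NE (f k) :=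
    Finset.sum_nonneg fun k _ => mul_nonneg (hrp _).le (hNE.nonneg _)
  have hGn10 : (0:ℝ) ≤ ∑ k ∈ Finset.range (n+2), (2:ℝ) ^ ((k:ℝ) * s₁) * NE (f k) :=
    Finset.sum_nonneg fun k _ => mul_nonneg (hrp _).le (hNE.nonneg _)
  have hγn1 : γ (n+1) = (2:ℝ) ^ (-(((n:ℝ)+1) * (s₁ - s)))
      * ∑ k ∈ Finset.range (n+2), (2:ℝ) ^ ((k:ℝ) * s₁) * NE (f k) := by
    rw [hγ (n+1)]
    norm_num
  have hγ0 : 0 ≤ γ n := by rw [hγ n]; exact mul_nonneg (hrp _).le hGn0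
  have hγ10 : 0 ≤ γ (n+1) := by rw [hγn1]; exact mul_nonneg (hrp _).le hGn10
  rcases le_or_gt (m:ℕ) n with hmn | hmn
  · -- case m ≤ n : Lipschitz estimate
    have hmn' : (m:ℝ) ≤ (n:ℝ) := by exact_mod_cast hmn
    have habs : |(m:ℝ) - (n:ℝ)| = (n:ℝ) - m := by
      rw [abs_of_nonpos (by linarith)]; ring
    set A := NE (f (n+1)) with hA
    have hA0 : 0 ≤ A := hNE.nonneg _
    have key1 : (2:ℝ) ^ ((m:ℝ) * (s - s₀)) * (2:ℝ) ^ (((n:ℝ)+1) * s₀)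
        ≤ (2:ℝ) ^ (-(κ * ((n:ℝ) - m))) * (2:ℝ) ^ (((n:ℝ)+1) * s) := by
      rw [hmul, hmul]
      apply hmono
      nlinarith [mul_nonneg (by linarith : (0:ℝ) ≤ s - s₀ - κ) (by linarith : (0:ℝ) ≤ (n:ℝ) - m)]
    have hA1 : (2:ℝ) ^ (((n:ℝ)+1) * s₁) * A
        ≤ ∑ k ∈ Finset.range (n+2), (2:ℝ) ^ ((k:ℝ) * s₁) * NE (f k) := by
      have hmem : n+1 ∈ Finset.range (n+2) := by simp
      have h := Finset.single_le_sum
        (f := fun k : ℕ => (2:ℝ) ^ ((k:ℝ) * s₁) * NE (f k))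
        (fun k _ => mul_nonneg (hrp _).le (hNE.nonneg _)) hmem
      push_cast at h ⊢
      exact h
    have key2 : (2:ℝ) ^ (((n:ℝ)+1) * s) * A ≤ γ (n+1) := by
      have h := mul_le_mul_of_nonneg_left hA1 (hrp (-(((n:ℝ)+1) * (s₁ - s)))).le
      rw [← mul_assoc, hmul] at h
      have e : -(((n:ℝ)+1) * (s₁ - s)) + ((n:ℝ)+1) * s₁ = ((n:ℝ)+1) * s := by ring
      rw [e] at h
      rw [hγn1]
      exact h
    have e0 : (m:ℝ) * s = (m:ℝ) * (s - s₀) + (m:ℝ) * s₀ := by ring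
    calc (2:ℝ) ^ ((m:ℝ) * s) * X
        = (2:ℝ) ^ ((m:ℝ) * (s - s₀)) * ((2:ℝ) ^ ((m:ℝ) * s₀) * X) := by
          rw [← mul_assoc, hmul, ← e0]
      _ ≤ (2:ℝ) ^ ((m:ℝ) * (s - s₀)) * (C₀ * ((2:ℝ) ^ (((n:ℝ)+1) * s₀) * A)) :=
          mul_le_mul_of_nonneg_left (hlip' n m) (hrp _).le
      _ = C₀ * (((2:ℝ) ^ ((m:ℝ) * (s - s₀)) * (2:ℝ) ^ (((n:ℝ)+1) * s₀)) * A) := by ring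
      _ ≤ C₀ * (((2:ℝ) ^ (-(κ * ((n:ℝ) - m))) * (2:ℝ) ^ (((n:ℝ)+1) * s)) * A) :=
          mul_le_mul_of_nonneg_left (mul_le_mul_of_nonneg_right key1 hA0) hC₀.le
      _ = C₀ * ((2:ℝ) ^ (-(κ * ((n:ℝ) - m))) * ((2:ℝ) ^ (((n:ℝ)+1) * s) * A)) := by ring
      _ ≤ C₀ * ((2:ℝ) ^ (-(κ * ((n:ℝ) - m))) * γ (n+1)) :=
          mul_le_mul_of_nonneg_left (mul_le_mul_of_nonneg_left key2 (hrp _).le) hC₀.le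
      _ ≤ C * ((2:ℝ) ^ (-(κ * ((n:ℝ) - m))) * (γ n + γ (n+1))) := by
          apply mul_le_mul hC₀C
          · exact mul_le_mul_of_nonneg_left (by linarith) (hrp _).le
          · exact mul_nonneg (hrp _).le hγ10
          · linarith
      _ = C * (2:ℝ) ^ (-(κ * |(m:ℝ) - (n:ℝ)|)) * (γ n + γ (n+1)) := by
          rw [habs]; ring
  · -- case n < m : tame estimate
    have hmn' : (n:ℝ) ≤ (m:ℝ) := by
      have : n ≤ m := by omega
      exact_mod_cast this
    have habs : |(m:ℝ) - (n:ℝ)| = (m:ℝ) - n := by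
      rw [abs_of_nonneg (by linarith)]
    set Y1 := NF (Φ (smoothS (n+1) f) m) with hY1
    set Y0 := NF (Φ (smoothS n f) m) with hY0
    have hY10 : 0 ≤ Y1 := hNF.nonneg _
    have hY00 : 0 ≤ Y0 := hNF.nonneg _
    have htri : X ≤ Y1 + Y0 := by
      have he : (Φ (smoothS (n+1) f) - Φ (smoothS n f)) m
          = Φ (smoothS (n+1) f) m + (-(Φ (smoothS n f) m)) := by
        simp [Pi.sub_apply, sub_eq_add_neg]
      rw [hX, he]
      calc NF (Φ (smoothS (n+1) f) m + (-(Φ (smoothS n f) m)))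
          ≤ NF (Φ (smoothS (n+1) f) m) + NF (-(Φ (smoothS n f) m)) := hNF.add_le _ _
        _ = Y1 + Y0 := by rw [hNF.neg]
    -- rewrite sums in terms of γ
    have hGn_eq : ∑ k ∈ Finset.range (n+1), (2:ℝ) ^ ((k:ℝ) * s₁) * NE (f k)
        = (2:ℝ) ^ ((n:ℝ) * (s₁ - s)) * γ n := by
      rw [hγ n, ← mul_assoc, hmul,
        (show (n:ℝ) * (s₁ - s) + -((n:ℝ) * (s₁ - s)) = 0 by ring), Real.rpow_zero, one_mul]
    have hGn1_eq : ∑ k ∈ Finset.range (n+2), (2:ℝ) ^ ((k:ℝ) * s₁) * NE (f k)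
        = (2:ℝ) ^ (((n:ℝ)+1) * (s₁ - s)) * γ (n+1) := by
      rw [hγn1, ← mul_assoc, hmul,
        (show ((n:ℝ)+1) * (s₁ - s) + -(((n:ℝ)+1) * (s₁ - s)) = 0 by ring),
        Real.rpow_zero, one_mul]
    -- key exponent bounds
    have kexp0 : (2:ℝ) ^ ((m:ℝ) * (s - s₁)) * (2:ℝ) ^ ((n:ℝ) * (s₁ - s))
        ≤ (2:ℝ) ^ (-(κ * ((m:ℝ) - n))) := by
      rw [hmul]
      apply hmono
      nlinarith [mul_nonneg (by linarith : (0:ℝ) ≤ s₁ - s - κ) (by linarith : (0:ℝ) ≤ (m:ℝ) - n)]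
    have kexp1 : (2:ℝ) ^ ((m:ℝ) * (s - s₁)) * (2:ℝ) ^ (((n:ℝ)+1) * (s₁ - s))
        ≤ (2:ℝ) ^ (s₁ - s) * (2:ℝ) ^ (-(κ * ((m:ℝ) - n))) := by
      rw [hmul, hmul]
      apply hmono
      nlinarith [mul_nonneg (by linarith : (0:ℝ) ≤ s₁ - s - κ) (by linarith : (0:ℝ) ≤ (m:ℝ) - n)]
    have k2 : C₁ * ((2:ℝ) ^ ((m:ℝ) * (s - s₁))
          * ∑ k ∈ Finset.range (n+1), (2:ℝ) ^ ((k:ℝ) * s₁) * NE (f k))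
        ≤ C * ((2:ℝ) ^ (-(κ * ((m:ℝ) - n))) * γ n) := by
      rw [hGn_eq]
      calc C₁ * ((2:ℝ) ^ ((m:ℝ) * (s - s₁)) * ((2:ℝ) ^ ((n:ℝ) * (s₁ - s)) * γ n))
          = C₁ * (((2:ℝ) ^ ((m:ℝ) * (s - s₁)) * (2:ℝ) ^ ((n:ℝ) * (s₁ - s))) * γ n) := by ring
        _ ≤ C₁ * ((2:ℝ) ^ (-(κ * ((m:ℝ) - n))) * γ n) :=
            mul_le_mul_of_nonneg_left (mul_le_mul_of_nonneg_right kexp0 hγ0) hC₁.le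
        _ ≤ C * ((2:ℝ) ^ (-(κ * ((m:ℝ) - n))) * γ n) :=
            mul_le_mul_of_nonneg_right hC₁C (mul_nonneg (hrp _).le hγ0)
    have k1 : C₁ * ((2:ℝ) ^ ((m:ℝ) * (s - s₁))
          * ∑ k ∈ Finset.range (n+2), (2:ℝ) ^ ((k:ℝ) * s₁) * NE (f k))
        ≤ C * ((2:ℝ) ^ (-(κ * ((m:ℝ) - n))) * γ (n+1)) := by
      rw [hGn1_eq]
      calc C₁ * ((2:ℝ) ^ ((m:ℝ) * (s - s₁)) * ((2:ℝ) ^ (((n:ℝ)+1) * (s₁ - s)) * γ (n+1)))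
          = C₁ * (((2:ℝ) ^ ((m:ℝ) * (s - s₁)) * (2:ℝ) ^ (((n:ℝ)+1) * (s₁ - s))) * γ (n+1)) := by
            ring
        _ ≤ C₁ * (((2:ℝ) ^ (s₁ - s) * (2:ℝ) ^ (-(κ * ((m:ℝ) - n)))) * γ (n+1)) :=
            mul_le_mul_of_nonneg_left (mul_le_mul_of_nonneg_right kexp1 hγ10) hC₁.le
        _ = ((2:ℝ) ^ (s₁ - s) * C₁) * ((2:ℝ) ^ (-(κ * ((m:ℝ) - n))) * γ (n+1)) := by ring
        _ ≤ C * ((2:ℝ) ^ (-(κ * ((m:ℝ) - n))) * γ (n+1)) :=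
            mul_le_mul_of_nonneg_right hC₁C' (mul_nonneg (hrp _).le hγ10)
    have e0 : (m:ℝ) * s = (m:ℝ) * (s - s₁) + (m:ℝ) * s₁ := by ring
    calc (2:ℝ) ^ ((m:ℝ) * s) * X
        ≤ (2:ℝ) ^ ((m:ℝ) * s) * (Y1 + Y0) :=
          mul_le_mul_of_nonneg_left htri (hrp _).le
      _ = (2:ℝ) ^ ((m:ℝ) * (s - s₁)) * ((2:ℝ) ^ ((m:ℝ) * s₁) * Y1)
          + (2:ℝ) ^ ((m:ℝ) * (s - s₁)) * ((2:ℝ) ^ ((m:ℝ) * s₁) * Y0) := by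
          rw [e0, ← hmul]; ring
      _ ≤ (2:ℝ) ^ ((m:ℝ) * (s - s₁))
            * (C₁ * ∑ k ∈ Finset.range (n+2), (2:ℝ) ^ ((k:ℝ) * s₁) * NE (f k))
          + (2:ℝ) ^ ((m:ℝ) * (s - s₁))
            * (C₁ * ∑ k ∈ Finset.range (n+1), (2:ℝ) ^ ((k:ℝ) * s₁) * NE (f k)) := by
          apply add_le_add
          · exact mul_le_mul_of_nonneg_left (htame' (n+1) m) (hrp _).le
          · exact mul_le_mul_of_nonneg_left (htame' n m) (hrp _).le
      _ = C₁ * ((2:ℝ) ^ ((m:ℝ) * (s - s₁))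
            * ∑ k ∈ Finset.range (n+2), (2:ℝ) ^ ((k:ℝ) * s₁) * NE (f k))
          + C₁ * ((2:ℝ) ^ ((m:ℝ) * (s - s₁))
            * ∑ k ∈ Finset.range (n+1), (2:ℝ) ^ ((k:ℝ) * s₁) * NE (f k)) := by ring
      _ ≤ C * ((2:ℝ) ^ (-(κ * ((m:ℝ) - n))) * γ (n+1))
          + C * ((2:ℝ) ^ (-(κ * ((m:ℝ) - n))) * γ n) := add_le_add k1 k2
      _ = C * (2:ℝ) ^ (-(κ * |(m:ℝ) - (n:ℝ)|)) * (γ n + γ (n+1)) := by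
          rw [habs]; ring
end
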